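/- arXiv:2306.13962 — 13 statements merged into one kernel-verified Lean document; each statement's English description precedes it below -/
import Mathlib

section
/- Let M, K be positive integers, let h_1, …, h_K ∈ ℂ^M, and let γ̄_k > 0 and σ_k > 0 be reals for each k ∈ {1,…,K}. Let V_1, …, V_K and Q be M×M Hermitian positive semidefinite matrices satisfying, for every k, the SINR constraint (1/γ̄_k)·h_k† V_k h_k − Σ_{j≠k} h_k† V_j h_k − h_k† Q h_k − σ_k² ≥ 0. Let β_1, …, β_K ≥ 0 be reals, let D be an M×M diagonal matrix with nonnegative real diagonal entries, and set C_k = I_M + Σ_{j≠k} β_j h_j h_j† + D. If for every k the matrix C_k − (β_k/γ̄_k) h_k h_k† is positive semidefinite and tr(V_k (C_k − (β_k/γ̄_k) h_k h_k†)) = 0, then every V_k has rank exactly one. -/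
open Matrix
open scoped ComplexOrder

/-- trace (Xᴴ X) = 0 implies X = 0 over ℂ. -/
lemma trace_conjTranspose_mul_self_eq_zero' {m n : Type*} [Fintype m] [Fintype n]
    {X : Matrix m n ℂ} (hX : (Xᴴ * X).trace = 0) : X = 0 := by
  have h1 : ((Xᴴ * X).trace).re = ∑ j, ∑ i, Complex.normSq (X i j) := by
    simp only [Matrix.trace, Matrix.diag, Matrix.mul_apply, Matrix.conjTranspose_apply,
      Complex.re_sum]
    refine Finset.sum_congr rfl fun j _ => Finset.sum_congr rfl fun i _ => ?_
    have : star (X i j) * X i j = (Complex.normSq (X i j) : ℂ) := by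
      rw [Complex.star_def, ← Complex.normSq_eq_conj_mul_self]
    rw [this, Complex.ofReal_re]
  rw [hX, Complex.zero_re] at h1
  have h2 : ∀ j ∈ Finset.univ, ∀ i ∈ Finset.univ, Complex.normSq (X i j) = 0 := by
    have := h1.symm
    intro j _ i _
    have hnn : ∀ j ∈ (Finset.univ : Finset n), 0 ≤ ∑ i, Complex.normSq (X i j) :=
      fun j _ => Finset.sum_nonneg fun i _ => Complex.normSq_nonneg _
    have hj := (Finset.sum_eq_zero_iff_of_nonneg hnn).mp this j (Finset.mem_univ j)
    exact (Finset.sum_eq_zero_iff_of_nonneg fun i _ => Complex.normSq_nonneg _).mp hj i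
      (Finset.mem_univ i)
  ext i j
  simpa using Complex.normSq_eq_zero.mp (h2 j (Finset.mem_univ j) i (Finset.mem_univ i))

/-- Complementary slackness: PSD matrices with trace of product zero multiply to zero. -/
lemma psd_trace_mul_zero {n : Type*} [Fintype n] [DecidableEq n]
    {A B : Matrix n n ℂ} (hA : A.PosSemidef) (hB : B.PosSemidef)
    (h : (A * B).trace = 0) : A * B = 0 := by
  obtain ⟨S, hS, -, hSS'⟩ := open scoped MatrixOrder in
    CFC.exists_sqrt_of_isSelfAdjoint_of_quasispectrumRestricts hA.isHermitian
      (QuasispectrumRestricts.nnreal_of_nonneg hA.nonneg)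
  obtain ⟨T, hT, -, hTT'⟩ := open scoped MatrixOrder in
    CFC.exists_sqrt_of_isSelfAdjoint_of_quasispectrumRestricts hB.isHermitian
      (QuasispectrumRestricts.nnreal_of_nonneg hB.nonneg)
  have hSh : Sᴴ = S := hS
  have hTh : Tᴴ = T := hT
  have hSS : S * S = A := by rw [hSS']
  have hTT : T * T = B := by rw [hTT']
  have key : ((S * T)ᴴ * (S * T)).trace = 0 := by
    have : (S * T)ᴴ * (S * T) = T * (A * T) := by
      rw [conjTranspose_mul, hSh, hTh, ← hSS, Matrix.mul_assoc, ← Matrix.mul_assoc S S T]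
    rw [this, Matrix.trace_mul_comm, Matrix.mul_assoc, hTT, h]
  have hST : S * T = 0 := trace_conjTranspose_mul_self_eq_zero' key
  calc A * B = S * (S * T) * T := by
        rw [← hSS, ← hTT, Matrix.mul_assoc, Matrix.mul_assoc, Matrix.mul_assoc]
    _ = 0 := by rw [hST]; simp

/-- Nonnegative real multiples of outer products `v vᴴ` are PSD. -/
lemma psd_smul_outer {M : ℕ} (v : Fin M → ℂ) {b : ℝ} (hb : 0 ≤ b) :
    ((b : ℂ) • vecMulVec v (star v)).PosSemidef := by
  have hW : (vecMulVec v (star v)).PosSemidef := by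
    rw [vecMulVec_eq Unit, ← conjTranspose_replicateCol]
    exact Matrix.posSemidef_self_mul_conjTranspose _
  refine Matrix.PosSemidef.of_dotProduct_mulVec_nonneg ?_ ?_
  · unfold Matrix.IsHermitian
    rw [conjTranspose_smul, hW.1]
    congr 1
    simp [Complex.star_def, Complex.conj_ofReal]
  · intro x
    rw [Matrix.smul_mulVec, dotProduct_smul, smul_eq_mul]
    exact mul_nonneg (Complex.zero_le_real.mpr hb) (hW.dotProduct_mulVec_nonneg x)


/-- KKT-based tightness of the SDR (Theorem 1 of the paper).
Complementary slackness together with the SINR constraints forces the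
relaxed variables `V k` to be rank one. -/
theorem stmt0 (M K : ℕ) (hM : 0 < M) (hK : 0 < K)
    (h : Fin K → Fin M → ℂ)
    (γ : Fin K → ℝ) (hγ : ∀ k, 0 < γ k)
    (σ : Fin K → ℝ) (hσ : ∀ k, 0 < σ k)
    (V : Fin K → Matrix (Fin M) (Fin M) ℂ) (hV : ∀ k, (V k).PosSemidef)
    (Q : Matrix (Fin M) (Fin M) ℂ) (hQ : Q.PosSemidef)
    (hSINR : ∀ k : Fin K,
      0 ≤ (1 / γ k) * (star (h k) ⬝ᵥ (V k *ᵥ h k)).re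
            - ∑ j ∈ Finset.univ.erase k, (star (h k) ⬝ᵥ (V j *ᵥ h k)).re
            - (star (h k) ⬝ᵥ (Q *ᵥ h k)).re - σ k ^ 2)
    (β : Fin K → ℝ) (hβ : ∀ k, 0 ≤ β k)
    (d : Fin M → ℝ) (hd : ∀ m, 0 ≤ d m)
    (D : Matrix (Fin M) (Fin M) ℂ) (hD : D = Matrix.diagonal fun m => (d m : ℂ))
    (C : Fin K → Matrix (Fin M) (Fin M) ℂ)
    (hC : ∀ k, C k = 1 + ∑ j ∈ Finset.univ.erase k,
        (β j : ℂ) • vecMulVec (h j) (star (h j)) + D)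
    (hpsd : ∀ k, (C k - ((β k / γ k : ℝ) : ℂ) • vecMulVec (h k) (star (h k))).PosSemidef)
    (hslack : ∀ k,
      (V k * (C k - ((β k / γ k : ℝ) : ℂ) • vecMulVec (h k) (star (h k)))).trace = 0) :
    ∀ k, (V k).rank = 1 := by
  intro k
  set c : ℂ := ((β k / γ k : ℝ) : ℂ) with hc
  set W : Matrix (Fin M) (Fin M) ℂ := vecMulVec (h k) (star (h k)) with hW
  -- complementary slackness gives V k * (C k - c • W) = 0
  have hVA : V k * (C k - c • W) = 0 := psd_trace_mul_zero (hV k) (hpsd k) (hslack k)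
  -- C k is positive definite
  have hCpd : (C k).PosDef := by
    rw [hC k]
    refine Matrix.PosDef.add_posSemidef (Matrix.PosDef.add_posSemidef Matrix.PosDef.one ?_) ?_
    · refine Finset.sum_induction _ _ (fun a b ha hb => ha.add hb) Matrix.PosSemidef.zero ?_
      intro j _
      exact psd_smul_outer (h j) (hβ j)
    · rw [hD]
      exact Matrix.PosSemidef.diagonal fun m => Complex.zero_le_real.mpr (hd m)
  -- rank ≤ 1
  have hVC : V k * C k = (c • (V k * Matrix.replicateCol Unit (h k))) * Matrix.replicateRow Unit (star (h k)) := by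
    have h0 : V k * C k - V k * (c • W) = 0 := by rw [← Matrix.mul_sub]; exact hVA
    have h1 : V k * C k = c • (V k * W) := by
      rw [sub_eq_zero.mp h0, Matrix.mul_smul]
    rw [h1, hW, vecMulVec_eq Unit, ← Matrix.mul_assoc, Matrix.smul_mul]
  have hle : (V k).rank ≤ 1 := by
    have e1 : (V k).rank = (V k * C k).rank :=
      (Matrix.rank_mul_eq_left_of_isUnit_det (C k) (V k) hCpd.det_pos.ne'.isUnit).symm
    rw [e1, hVC]
    calc ((c • (V k * Matrix.replicateCol Unit (h k))) * Matrix.replicateRow Unit (star (h k))).rank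
        ≤ (c • (V k * Matrix.replicateCol Unit (h k))).rank := Matrix.rank_mul_le_left _ _
      _ ≤ Fintype.card Unit := Matrix.rank_le_card_width _
      _ = 1 := by simp
  -- rank ≥ 1
  have hre : 0 < (star (h k) ⬝ᵥ (V k *ᵥ h k)).re := by
    have hs : 0 ≤ ∑ j ∈ Finset.univ.erase k, (star (h k) ⬝ᵥ (V j *ᵥ h k)).re :=
      Finset.sum_nonneg fun j _ => (hV j).re_dotProduct_nonneg (h k)
    have hq : 0 ≤ (star (h k) ⬝ᵥ (Q *ᵥ h k)).re := hQ.re_dotProduct_nonneg (h k)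
    have hσ2 : 0 < σ k ^ 2 := pow_pos (hσ k) 2
    have hγ' : 0 < 1 / γ k := one_div_pos.mpr (hγ k)
    nlinarith [hSINR k]
  have hne : V k *ᵥ h k ≠ 0 := by
    intro h0
    rw [h0] at hre
    simp at hre
  have hge : (V k).rank ≠ 0 := by
    intro h0
    rw [Matrix.rank, Submodule.finrank_eq_zero] at h0
    have : (V k).mulVecLin (h k) ∈ LinearMap.range (V k).mulVecLin :=
      LinearMap.mem_range_self _ _
    rw [h0, Submodule.mem_bot, Matrix.mulVecLin_apply] at this
    exact hne this
  omega
end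

section
/- Let M ≥ 2, let η > 1 be real, and let Γ be an M×M Hermitian complex matrix with Γ^{(1,1)} > 0. Define the M×M matrix Λ by: Λ^{(1,1)} = Γ^{(1,1)}/(η−1), Λ^{(1,2:M)} = Γ^{(1,2:M)}/η, Λ^{(2:M,1)} = Γ^{(2:M,1)}/η, and Λ^{(2:M,2:M)} = ((η−1)/η²)·Γ^{(2:M,1)} Γ^{(1,2:M)} / Γ^{(1,1)}. Then (a) Λ is Hermitian positive semidefinite of rank one, and (b) η·Λ − Λ^{(1,1)}·e₁ e₁† = Γ − blockDiag(0, S_η(Γ)), where blockDiag(0, S_η(Γ)) denotes the M×M matrix that is zero except for the (M−1)×(M−1) matrix S_η(Γ) placed in the lower-right block. -/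
open Matrix
open scoped ComplexOrder

/-- The map `S_η`: for an `(n+1) × (n+1)` matrix `Γ`, the `n × n` matrix
`S_η(Γ) = Γ^{(2:n,2:n)} - ((η-1)/η) · Γ^{(2:n,1)} Γ^{(1,2:n)} / Γ^{(1,1)}`. -/
noncomputable def schurS {n : ℕ} (η : ℝ) (Γ : Matrix (Fin (n + 1)) (Fin (n + 1)) ℂ) :
    Matrix (Fin n) (Fin n) ℂ :=
  Matrix.of fun i j =>
    Γ i.succ j.succ - (((η - 1) / η : ℝ) : ℂ) * (Γ i.succ 0 * Γ 0 j.succ) / Γ 0 0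

/-- `blockDiag(0, B)`: the `(n+1) × (n+1)` matrix that is zero except for the `n × n`
matrix `B` placed in the lower-right block. -/
def padZero {n : ℕ} (B : Matrix (Fin n) (Fin n) ℂ) :
    Matrix (Fin (n + 1)) (Fin (n + 1)) ℂ :=
  Matrix.of fun i j =>
    if hi : i = 0 then 0 else if hj : j = 0 then 0 else B (i.pred hi) (j.pred hj)

/-- correctness of one elimination step in the closed-form construction of the
dual multipliers `Λ_m` (the matrix size is `M = n + 2 ≥ 2`). -/
theorem stmt4 (n : ℕ) (η : ℝ) (hη : 1 < η)
    (Γ : Matrix (Fin (n + 2)) (Fin (n + 2)) ℂ) (hΓ : Γ.IsHermitian) (hΓ11 : 0 < Γ 0 0)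
    (Λ : Matrix (Fin (n + 2)) (Fin (n + 2)) ℂ)
    (hΛ : Λ = Matrix.of fun i j =>
      if hi : i = 0 then
        if hj : j = 0 then Γ 0 0 / ((η : ℂ) - 1) else Γ 0 j / (η : ℂ)
      else
        if hj : j = 0 then Γ i 0 / (η : ℂ)
        else (((η - 1) / η ^ 2 : ℝ) : ℂ) * (Γ i 0 * Γ 0 j) / Γ 0 0) :
    (Λ.PosSemidef ∧ Λ.rank = 1) ∧
      (η : ℂ) • Λ - Λ 0 0 • vecMulVec (Pi.single 0 1) (star (Pi.single 0 1))
        = Γ - padZero (schurS η Γ) := by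
  have hηC : (η : ℂ) ≠ 0 := by
    exact_mod_cast ne_of_gt (lt_trans one_pos hη : (0:ℝ) < η)
  have hη1C : (η : ℂ) - 1 ≠ 0 := by
    intro h
    have : (η : ℂ) = 1 := by linear_combination h
    exact (ne_of_gt hη) (by exact_mod_cast this)
  have hΓ00 : Γ 0 0 ≠ 0 := ne_of_gt hΓ11
  constructor
  · have hη0 : (0:ℝ) < η := lt_trans one_pos hη
    have hη1 : (0:ℝ) < η - 1 := by linarith
    set r : ℝ := (Γ 0 0).re with hr
    have hrpos : 0 < r := (Complex.lt_def.mp hΓ11).1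
    have hΓ00r : Γ 0 0 = (r : ℂ) := by
      rw [Complex.lt_def] at hΓ11
      exact (Complex.ext (by simp [hr]) (by simp [hΓ11.2.symm])).symm
    have hrne : r ≠ 0 := ne_of_gt hrpos
    set a : Fin (n + 2) → ℂ := fun i =>
      if i = 0 then ((Real.sqrt (r / (η - 1)) : ℝ) : ℂ)
      else ((Real.sqrt ((η - 1) / r) / η : ℝ) : ℂ) * Γ i 0 with ha
    have hsq1 : Real.sqrt (r / (η - 1)) * Real.sqrt (r / (η - 1)) = r / (η - 1) :=
      Real.mul_self_sqrt (le_of_lt (div_pos hrpos hη1))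
    have hsq2 : Real.sqrt ((η - 1) / r) * Real.sqrt ((η - 1) / r) = (η - 1) / r :=
      Real.mul_self_sqrt (le_of_lt (div_pos hη1 hrpos))
    have hsq3 : Real.sqrt (r / (η - 1)) * Real.sqrt ((η - 1) / r) = 1 := by
      rw [← Real.sqrt_mul (le_of_lt (div_pos hrpos hη1))]
      rw [show r / (η - 1) * ((η - 1) / r) = 1 by field_simp]
      exact Real.sqrt_one
    have herm : ∀ i j, (starRingEnd ℂ) (Γ j i) = Γ i j := fun i j => hΓ.apply i j
    have key : Λ = vecMulVec a (star a) := by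
      ext i j
      simp only [hΛ, ha, Matrix.of_apply, vecMulVec_apply, Pi.star_apply, RCLike.star_def]
      rcases eq_or_ne i 0 with hi | hi <;> rcases eq_or_ne j 0 with hj | hj
      · rw [dif_pos hi, dif_pos hj, if_pos hi, if_pos hj, hΓ00r, Complex.conj_ofReal, ← Complex.ofReal_mul, hsq1]
        push_cast
        ring
      · rw [dif_pos hi, dif_neg hj, if_pos hi, if_neg hj, _root_.map_mul,
          Complex.conj_ofReal, herm, ← mul_assoc, ← Complex.ofReal_mul,
          show Real.sqrt (r/(η-1)) * (Real.sqrt ((η-1)/r)/η) = 1/η by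
            rw [← mul_div_assoc, hsq3]]
        push_cast
        ring
      · rw [dif_neg hi, dif_pos hj, if_neg hi, if_pos hj, Complex.conj_ofReal, mul_right_comm, ← Complex.ofReal_mul,
          show (Real.sqrt ((η-1)/r)/η) * Real.sqrt (r/(η-1)) = 1/η by
            rw [div_mul_eq_mul_div, mul_comm, hsq3]]
        push_cast
        ring
      · rw [dif_neg hi, dif_neg hj, if_neg hi, if_neg hj, _root_.map_mul,
          Complex.conj_ofReal, herm, hΓ00r]
        rw [show ((Real.sqrt ((η-1)/r) / η : ℝ) : ℂ) * Γ i 0 *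
            (((Real.sqrt ((η-1)/r) / η : ℝ) : ℂ) * Γ 0 j)
            = (((Real.sqrt ((η-1)/r) * Real.sqrt ((η-1)/r)) / (η * η) : ℝ) : ℂ)
              * (Γ i 0 * Γ 0 j) by push_cast; ring, hsq2]
        have hrC : (r:ℂ) ≠ 0 := Complex.ofReal_ne_zero.mpr hrne
        have hηC : (η:ℂ) ≠ 0 := Complex.ofReal_ne_zero.mpr (ne_of_gt hη0)
        push_cast
        field_simp
    have hΛ00 : Λ 0 0 ≠ 0 := by
      simp only [hΛ, Matrix.of_apply, dif_pos]
      have h1 : (η : ℂ) - 1 ≠ 0 := by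
        intro h
        have : (η : ℂ) = 1 := by linear_combination h
        exact (ne_of_gt hη) (by exact_mod_cast this)
      exact div_ne_zero (ne_of_gt hΓ11) h1
    constructor
    · rw [key, vecMulVec_eq (Fin 1), ← conjTranspose_replicateCol]
      exact posSemidef_self_mul_conjTranspose _
    · have hle : Λ.rank ≤ 1 := by
        rw [key, vecMulVec_eq (Fin 1)]
        refine le_trans (rank_mul_le_left _ _) ?_
        exact (rank_le_card_width (replicateCol (Fin 1) a)).trans (by simp)
      have hpos : 0 < Λ.rank := by
        rw [Matrix.rank, Module.finrank_pos_iff_exists_ne_zero]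
        refine ⟨⟨Λ *ᵥ Pi.single 0 1, LinearMap.mem_range_self _ _⟩, ?_⟩
        intro h
        apply hΛ00
        have := congrArg (fun v : LinearMap.range Λ.mulVecLin => (v : Fin (n+2) → ℂ) 0) h
        simpa [mulVec_single] using this
      omega
  · ext i j
    rcases eq_or_ne i 0 with hi | hi <;> rcases eq_or_ne j 0 with hj | hj <;>
      simp only [hΛ, hi, hj, Matrix.sub_apply, Matrix.smul_apply, Matrix.of_apply,
        dif_pos, dif_neg, padZero, schurS, vecMulVec_apply, Pi.star_apply,
        Pi.single_apply, smul_eq_mul, Fin.succ_pred, if_pos, if_neg, star_one,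
        mul_one, star_zero, mul_zero, sub_zero]
    · field_simp
    · simp only [dite_false, if_false, star_zero, mul_zero, sub_zero]
      field_simp
    · simp only [dite_false, if_false, star_zero, mul_zero, sub_zero]
      field_simp
    · push_cast
      field_simp
      ring
end

section
/- Let n ≥ 2 and let η > 1 be real. For n×n Hermitian positive definite complex matrices, the map S_η satisfies: (a) homogeneity: S_η(t·Γ) = t·S_η(Γ) for every t > 0 and every positive definite Γ; (b) concavity in the Loewner order: for positive definite Γ₁, Γ₂ and θ ∈ [0,1], S_η(θΓ₁ + (1−θ)Γ₂) − (θ·S_η(Γ₁) + (1−θ)·S_η(Γ₂)) is positive semidefinite; (c) strict positivity: if Γ is positive definite then S_η(Γ) is positive definite. -/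
open Matrix
open scoped ComplexOrder

lemma diag_pos' {m : ℕ} {Γ : Matrix (Fin (m+1)) (Fin (m+1)) ℂ} (h : Γ.PosDef) (k : Fin (m+1)) :
    0 < Γ k k := by
  have := h.dotProduct_mulVec_pos (x := Pi.single k 1) (fun hc => one_ne_zero (α := ℂ) (by simpa using congrFun hc k))
  simpa [dotProduct, mulVec, Pi.single_apply, Finset.mul_sum, apply_ite] using this

lemma schurS_isHermitian {m : ℕ} (η : ℝ) {Γ : Matrix (Fin (m+1)) (Fin (m+1)) ℂ}
    (hH : Γ.IsHermitian) : (schurS η Γ).IsHermitian := by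
  refine Matrix.ext fun i j => ?_
  have h1 : ∀ a b : Fin (m+1), (starRingEnd ℂ) (Γ a b) = Γ b a := fun a b => hH.apply b a
  simp only [conjTranspose_apply, schurS, of_apply, star_sub, star_div₀, RCLike.star_def,
    _root_.map_mul, Complex.conj_ofReal, h1]
  ring

lemma conj_sum_row {m : ℕ} {Γ : Matrix (Fin (m+1)) (Fin (m+1)) ℂ} (hH : Γ.IsHermitian)
    (x : Fin m → ℂ) :
    (starRingEnd ℂ) (∑ j, Γ 0 j.succ * x j) = ∑ i, (starRingEnd ℂ) (x i) * Γ i.succ 0 := by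
  rw [map_sum]
  refine Finset.sum_congr rfl fun i _ => ?_
  rw [_root_.map_mul, ← hH.apply i.succ 0]
  exact mul_comm _ _

lemma quadS {m : ℕ} (η : ℝ) {Γ : Matrix (Fin (m+1)) (Fin (m+1)) ℂ} (hH : Γ.IsHermitian)
    (x : Fin m → ℂ) :
    star x ⬝ᵥ (schurS η Γ *ᵥ x) =
      (∑ i, ∑ j, (starRingEnd ℂ) (x i) * Γ i.succ j.succ * x j)
        - (((η - 1) / η : ℝ) : ℂ) * ((Complex.normSq (∑ j, Γ 0 j.succ * x j) : ℝ) : ℂ)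
            / Γ 0 0 := by
  rw [Complex.normSq_eq_conj_mul_self, conj_sum_row hH, Finset.sum_mul_sum]
  simp only [div_eq_mul_inv, Finset.mul_sum, Finset.sum_mul]
  rw [← Finset.sum_sub_distrib]
  simp only [dotProduct, mulVec, schurS, of_apply, Pi.star_apply, RCLike.star_def, Finset.mul_sum]
  refine Finset.sum_congr rfl fun i _ => ?_
  rw [← Finset.sum_sub_distrib]
  refine Finset.sum_congr rfl fun j _ => ?_
  ring

lemma quadGamma {m : ℕ} {Γ : Matrix (Fin (m+1)) (Fin (m+1)) ℂ}
    (x : Fin m → ℂ) (z : ℂ) :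
    star (Fin.cons z x : Fin (m+1) → ℂ) ⬝ᵥ (Γ *ᵥ (Fin.cons z x)) =
      (starRingEnd ℂ) z * (Γ 0 0 * z) + (starRingEnd ℂ) z * (∑ j, Γ 0 j.succ * x j)
        + (∑ i, (starRingEnd ℂ) (x i) * Γ i.succ 0) * z
        + ∑ i, ∑ j, (starRingEnd ℂ) (x i) * Γ i.succ j.succ * x j := by
  simp only [dotProduct, mulVec, Fin.sum_univ_succ, Fin.cons_zero, Fin.cons_succ,
    Pi.star_apply, RCLike.star_def, mul_add, Finset.sum_add_distrib, Finset.mul_sum,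
    Finset.sum_mul, mul_assoc]
  ring

lemma algC {η a : ℝ} (hη0 : 0 < η) (ha : a ≠ 0) (s T : ℂ) :
    T - (((η - 1) / η : ℝ) : ℂ) * ((Complex.normSq s : ℝ) : ℂ) / (a : ℂ) =
      ((starRingEnd ℂ) (-(s / (a:ℂ))) * ((a:ℂ) * (-(s / (a:ℂ))))
        + (starRingEnd ℂ) (-(s / (a:ℂ))) * s
        + (starRingEnd ℂ) s * (-(s / (a:ℂ))) + T)
      + ((1 / η : ℝ) : ℂ) * ((Complex.normSq s : ℝ) : ℂ) / ((a : ℝ) : ℂ) := by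
  have hηC : (η : ℂ) ≠ 0 := by exact_mod_cast ne_of_gt hη0
  have haC : (a : ℂ) ≠ 0 := by exact_mod_cast ha
  simp only [Complex.normSq_eq_conj_mul_self, map_neg, map_div₀, Complex.conj_ofReal,
    Complex.ofReal_div, Complex.ofReal_sub, Complex.ofReal_one]
  field_simp
  ring

lemma schurS_posDef {m : ℕ} {η : ℝ} (hη : 1 < η) {Γ : Matrix (Fin (m+1)) (Fin (m+1)) ℂ}
    (hΓ : Γ.PosDef) : (schurS η Γ).PosDef := by
  have hη0 : (0:ℝ) < η := lt_trans one_pos hη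
  refine Matrix.PosDef.of_dotProduct_mulVec_pos (schurS_isHermitian η hΓ.1) fun x hx => ?_
  obtain ⟨hre, him⟩ := Complex.lt_def.mp (diag_pos' hΓ 0)
  have haC : Γ 0 0 = ((Γ 0 0).re : ℂ) := by
    apply Complex.ext
    · simp
    · simp [← him]
  have ha0 : 0 < (Γ 0 0).re := by simpa using hre
  set z : ℂ := -((∑ j, Γ 0 j.succ * x j) / ((Γ 0 0).re : ℂ)) with hz
  have hy : (Fin.cons z x : Fin (m+1) → ℂ) ≠ 0 := by
    obtain ⟨i, hi⟩ := Function.ne_iff.mp hx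
    intro hc
    exact hi (by simpa using congrFun hc i.succ)
  have hpos := hΓ.dotProduct_mulVec_pos hy
  rw [quadGamma x z] at hpos
  rw [quadS η hΓ.1 x]
  rw [haC, algC hη0 (ne_of_gt ha0) (∑ j, Γ 0 j.succ * x j)
    (∑ i, ∑ j, (starRingEnd ℂ) (x i) * Γ i.succ j.succ * x j)]
  refine add_pos_of_pos_of_nonneg ?_ ?_
  · rw [← conj_sum_row hΓ.1 x, ← hz, ← haC] at *
    convert hpos using 2
  · rw [div_eq_mul_inv, ← Complex.ofReal_mul, ← Complex.ofReal_inv, ← Complex.ofReal_mul,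
      Complex.zero_le_real]
    have h1 := Complex.normSq_nonneg (∑ j, Γ 0 j.succ * x j)
    have h2 : 0 < (1:ℝ)/η := by positivity
    have h3 : (0:ℝ) ≤ ((Γ 0 0).re)⁻¹ := le_of_lt (by positivity)
    exact mul_nonneg (mul_nonneg (le_of_lt h2) h1) h3

lemma schurS_smul {m : ℕ} (η : ℝ) {Γ : Matrix (Fin (m+1)) (Fin (m+1)) ℂ}
    (hΓ : Γ.PosDef) (t : ℝ) (ht : 0 < t) :
    schurS η ((t : ℂ) • Γ) = (t : ℂ) • schurS η Γ := by
  have ha : Γ 0 0 ≠ 0 := ne_of_gt (diag_pos' hΓ 0)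
  have htC : (t : ℂ) ≠ 0 := by exact_mod_cast ne_of_gt ht
  refine Matrix.ext fun i j => ?_
  simp only [schurS, of_apply, Matrix.smul_apply, smul_eq_mul]
  rw [mul_sub]
  congr 1
  rw [show (((η - 1) / η : ℝ) : ℂ) * ((t:ℂ) * Γ i.succ 0 * ((t:ℂ) * Γ 0 j.succ))
      = (t:ℂ) * ((t:ℂ) * ((((η - 1) / η : ℝ) : ℂ) * (Γ i.succ 0 * Γ 0 j.succ))) from by ring,
    mul_div_mul_left _ _ htC, mul_div_assoc]

lemma smul_herm {m : ℕ} (t : ℝ) {M : Matrix (Fin m) (Fin m) ℂ} (h : M.IsHermitian) :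
    ((t : ℂ) • M).IsHermitian := by
  refine Matrix.ext fun i j => ?_
  have h1 : ∀ a b : Fin m, (starRingEnd ℂ) (M a b) = M b a := fun a b => h.apply b a
  simp [conjTranspose_apply, Matrix.smul_apply, smul_eq_mul, _root_.map_mul,
    Complex.conj_ofReal, h1, RCLike.star_def]

lemma add_herm' {m : ℕ} {A B : Matrix (Fin m) (Fin m) ℂ} (hA : A.IsHermitian)
    (hB : B.IsHermitian) : (A + B).IsHermitian := hA.add hB

lemma algR {η θ a₁ a₂ : ℝ} (hη : 1 < η) (hθ0 : 0 ≤ θ) (hθ1 : θ ≤ 1)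
    (ha₁ : 0 < a₁) (ha₂ : 0 < a₂) (s₁ s₂ : ℂ) :
    0 ≤ θ * ((η-1)/η * Complex.normSq s₁ / a₁) + (1-θ) * ((η-1)/η * Complex.normSq s₂ / a₂)
      - (η-1)/η * Complex.normSq ((θ:ℂ)*s₁ + ((1-θ:ℝ):ℂ)*s₂) / (θ*a₁ + (1-θ)*a₂) := by
  have hA : 0 < θ*a₁ + (1-θ)*a₂ := by
    rcases eq_or_lt_of_le hθ0 with h|h
    · rw [← h]; linarith
    · nlinarith [mul_nonneg (sub_nonneg.mpr hθ1) ha₂.le, mul_pos h ha₁]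
  have hη0 : (0:ℝ) < η := lt_trans one_pos hη
  have key : θ * ((η-1)/η * Complex.normSq s₁ / a₁) + (1-θ) * ((η-1)/η * Complex.normSq s₂ / a₂)
      - (η-1)/η * Complex.normSq ((θ:ℂ)*s₁ + ((1-θ:ℝ):ℂ)*s₂) / (θ*a₁ + (1-θ)*a₂)
      = (η-1)/η * (θ*(1-θ) * Complex.normSq ((a₂:ℂ)*s₁ - (a₁:ℂ)*s₂))
          / (a₁ * a₂ * (θ*a₁ + (1-θ)*a₂)) := by
    simp only [Complex.normSq_apply, Complex.add_re, Complex.add_im, Complex.mul_re,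
      Complex.mul_im, Complex.sub_re, Complex.sub_im, Complex.ofReal_re, Complex.ofReal_im]
    field_simp
    ring
  rw [key]
  have hc : 0 ≤ (η-1)/η := div_nonneg (by linarith) (by linarith)
  have h2 : 0 ≤ θ*(1-θ) * Complex.normSq ((a₂:ℂ)*s₁ - (a₁:ℂ)*s₂) :=
    mul_nonneg (mul_nonneg hθ0 (by linarith)) (Complex.normSq_nonneg _)
  positivity

lemma schurS_concave {m : ℕ} {η : ℝ} (hη : 1 < η)
    {Γ₁ Γ₂ : Matrix (Fin (m+1)) (Fin (m+1)) ℂ} (h₁ : Γ₁.PosDef) (h₂ : Γ₂.PosDef)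
    {θ : ℝ} (hθ0 : 0 ≤ θ) (hθ1 : θ ≤ 1) :
    (schurS η ((θ : ℂ) • Γ₁ + ((1 - θ : ℝ) : ℂ) • Γ₂)
      - ((θ : ℂ) • schurS η Γ₁ + ((1 - θ : ℝ) : ℂ) • schurS η Γ₂)).PosSemidef := by
  set Γθ : Matrix (Fin (m+1)) (Fin (m+1)) ℂ := (θ : ℂ) • Γ₁ + ((1 - θ : ℝ) : ℂ) • Γ₂ with hΓθ
  have hHθ : Γθ.IsHermitian := (smul_herm θ h₁.1).add (smul_herm (1-θ) h₂.1)
  obtain ⟨hre₁, him₁⟩ := Complex.lt_def.mp (diag_pos' h₁ 0)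
  obtain ⟨hre₂, him₂⟩ := Complex.lt_def.mp (diag_pos' h₂ 0)
  have ha₁ : Γ₁ 0 0 = ((Γ₁ 0 0).re : ℂ) := Complex.ext (by simp) (by simp [← him₁])
  have ha₂ : Γ₂ 0 0 = ((Γ₂ 0 0).re : ℂ) := Complex.ext (by simp) (by simp [← him₂])
  have ha₁0 : 0 < (Γ₁ 0 0).re := by simpa using hre₁
  have ha₂0 : 0 < (Γ₂ 0 0).re := by simpa using hre₂
  refine Matrix.PosSemidef.of_dotProduct_mulVec_nonneg ((schurS_isHermitian η hHθ).sub ((smul_herm θ (schurS_isHermitian η h₁.1)).add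
    (smul_herm (1-θ) (schurS_isHermitian η h₂.1)))) fun x => ?_
  have e : star x ⬝ᵥ ((schurS η Γθ
        - ((θ : ℂ) • schurS η Γ₁ + ((1 - θ : ℝ) : ℂ) • schurS η Γ₂)) *ᵥ x)
      = star x ⬝ᵥ (schurS η Γθ *ᵥ x)
        - ((θ : ℂ) * (star x ⬝ᵥ (schurS η Γ₁ *ᵥ x))
          + ((1 - θ : ℝ) : ℂ) * (star x ⬝ᵥ (schurS η Γ₂ *ᵥ x))) := by
    simp [sub_mulVec, add_mulVec, smul_mulVec, dotProduct_sub, dotProduct_add,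
      dotProduct_smul, smul_eq_mul]
  rw [e, quadS η hHθ x, quadS η h₁.1 x, quadS η h₂.1 x]
  have hθ00 : Γθ 0 0 = ((θ * (Γ₁ 0 0).re + (1-θ) * (Γ₂ 0 0).re : ℝ) : ℂ) := by
    rw [hΓθ]
    simp only [Matrix.add_apply, Matrix.smul_apply, smul_eq_mul]
    rw [ha₁, ha₂]
    push_cast
    simp only [Complex.ofReal_re]
  have hsθ : (∑ j, Γθ 0 j.succ * x j)
      = (θ : ℂ) * (∑ j, Γ₁ 0 j.succ * x j) + ((1 - θ : ℝ) : ℂ) * (∑ j, Γ₂ 0 j.succ * x j) := by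
    rw [hΓθ]
    simp only [Matrix.add_apply, Matrix.smul_apply, smul_eq_mul, add_mul,
      Finset.sum_add_distrib, Finset.mul_sum, mul_assoc]
  have hTθ : (∑ i, ∑ j, (starRingEnd ℂ) (x i) * Γθ i.succ j.succ * x j)
      = (θ : ℂ) * (∑ i, ∑ j, (starRingEnd ℂ) (x i) * Γ₁ i.succ j.succ * x j)
        + ((1 - θ : ℝ) : ℂ) * (∑ i, ∑ j, (starRingEnd ℂ) (x i) * Γ₂ i.succ j.succ * x j) := by
    rw [hΓθ]
    simp only [Matrix.add_apply, Matrix.smul_apply, smul_eq_mul, Finset.mul_sum,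
      ← Finset.sum_add_distrib]
    refine Finset.sum_congr rfl fun i _ => ?_
    refine Finset.sum_congr rfl fun j _ => ?_
    ring
  rw [hθ00, hsθ, hTθ, ha₁, ha₂]
  simp only [Complex.ofReal_re]
  have final : ((θ : ℂ) * (∑ i, ∑ j, (starRingEnd ℂ) (x i) * Γ₁ i.succ j.succ * x j)
        + ((1 - θ : ℝ) : ℂ) * (∑ i, ∑ j, (starRingEnd ℂ) (x i) * Γ₂ i.succ j.succ * x j)
        - (((η - 1) / η : ℝ) : ℂ) * ((Complex.normSq ((θ : ℂ) * (∑ j, Γ₁ 0 j.succ * x j)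
            + ((1 - θ : ℝ) : ℂ) * (∑ j, Γ₂ 0 j.succ * x j)) : ℝ) : ℂ)
            / ((θ * (Γ₁ 0 0).re + (1-θ) * (Γ₂ 0 0).re : ℝ) : ℂ))
      - ((θ : ℂ) * ((∑ i, ∑ j, (starRingEnd ℂ) (x i) * Γ₁ i.succ j.succ * x j)
          - (((η - 1) / η : ℝ) : ℂ) * ((Complex.normSq (∑ j, Γ₁ 0 j.succ * x j) : ℝ) : ℂ)
            / (((Γ₁ 0 0).re : ℝ) : ℂ))
        + ((1 - θ : ℝ) : ℂ) * ((∑ i, ∑ j, (starRingEnd ℂ) (x i) * Γ₂ i.succ j.succ * x j)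
          - (((η - 1) / η : ℝ) : ℂ) * ((Complex.normSq (∑ j, Γ₂ 0 j.succ * x j) : ℝ) : ℂ)
            / (((Γ₂ 0 0).re : ℝ) : ℂ)))
      = ((θ * ((η-1)/η * Complex.normSq (∑ j, Γ₁ 0 j.succ * x j) / (Γ₁ 0 0).re)
          + (1-θ) * ((η-1)/η * Complex.normSq (∑ j, Γ₂ 0 j.succ * x j) / (Γ₂ 0 0).re)
          - (η-1)/η * Complex.normSq ((θ:ℂ) * (∑ j, Γ₁ 0 j.succ * x j)
              + ((1-θ:ℝ):ℂ) * (∑ j, Γ₂ 0 j.succ * x j))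
            / (θ * (Γ₁ 0 0).re + (1-θ) * (Γ₂ 0 0).re) : ℝ) : ℂ) := by
    push_cast
    ring
  rw [final, Complex.zero_le_real]
  exact algR hη hθ0 hθ1 ha₁0 ha₂0 _ _

/-- on positive definite matrices of size `n + 2 ≥ 2`, the map `S_η` (for `η > 1`)
is (a) positively homogeneous, (b) concave in the Loewner order, and (c) strictly positive. -/
theorem stmt5 (n : ℕ) (η : ℝ) (hη : 1 < η) :
    (∀ Γ : Matrix (Fin (n + 2)) (Fin (n + 2)) ℂ, Γ.PosDef → ∀ t : ℝ, 0 < t →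
        schurS η ((t : ℂ) • Γ) = (t : ℂ) • schurS η Γ) ∧
    (∀ Γ₁ Γ₂ : Matrix (Fin (n + 2)) (Fin (n + 2)) ℂ, Γ₁.PosDef → Γ₂.PosDef →
        ∀ θ : ℝ, 0 ≤ θ → θ ≤ 1 →
        (schurS η ((θ : ℂ) • Γ₁ + ((1 - θ : ℝ) : ℂ) • Γ₂)
          - ((θ : ℂ) • schurS η Γ₁ + ((1 - θ : ℝ) : ℂ) • schurS η Γ₂)).PosSemidef) ∧
    (∀ Γ : Matrix (Fin (n + 2)) (Fin (n + 2)) ℂ, Γ.PosDef → (schurS η Γ).PosDef) := by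
  exact ⟨fun Γ hΓ t ht => schurS_smul η hΓ t ht,
    fun Γ₁ Γ₂ h₁ h₂ θ hθ0 hθ1 => schurS_concave hη h₁ h₂ hθ0 hθ1,
    fun Γ hΓ => schurS_posDef hη hΓ⟩
end

section
/- Let M ≥ 2 and K ≥ 1 be integers, let h_1, …, h_K ∈ ℂ^M, and let η_1, …, η_M be reals with η_m > 1 for each m. For β ∈ ℝ^K with nonnegative entries, define the M×M Hermitian positive definite matrix Γ(β) = I_M + Σ_{k=1}^K β_k h_k h_k†. For m ∈ {1,…,M}, define T_m as the composition S_{η_{m−1}} ∘ ⋯ ∘ S_{η_1} (with T_1 the identity map), so that T_m(Γ(β)) is an (M−m+1)×(M−m+1) positive definite matrix, and define the real number L_m(β) = (η_m − 1)^{-1} · (T_m(Γ(β)))^{(1,1)}. Then for every m: (a) L_m(β) > 0 for all β ≥ 0; (b) for every α > 1 and every nonzero β ≥ 0, L_m(α·β) < α·L_m(β); (c) if β₁ ≥ β₂ ≥ 0 componentwise, then L_m(β₁) ≥ L_m(β₂). -/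
open Matrix
open scoped ComplexOrder

/-- The composition `T = S_{η (j-1)} ∘ ⋯ ∘ S_{η 1} ∘ S_{η 0}` applied to an
`(n + j) × (n + j)` matrix, yielding an `n × n` matrix (`j` elimination steps). -/
noncomputable def iterT : {n : ℕ} → (j : ℕ) → (η : ℕ → ℝ) →
    Matrix (Fin (n + j)) (Fin (n + j)) ℂ → Matrix (Fin n) (Fin n) ℂ
  | _, 0, _, Γ => Γ
  | _, j + 1, η, Γ => iterT j (fun i => η (i + 1)) (schurS (η 0) Γ)

noncomputable def qf {n : ℕ} (A : Matrix (Fin n) (Fin n) ℂ) (v : Fin n → ℂ) : ℂ :=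
  ∑ i, ∑ j, (starRingEnd ℂ) (v i) * A i j * v j

def e0 {n : ℕ} : Fin (n+1) → ℂ := fun i => if i = 0 then 1 else 0

noncomputable def nv {n : ℕ} (v : Fin n → ℂ) : ℝ := ∑ i, Complex.normSq (v i)

def Herm {n : ℕ} (A : Matrix (Fin n) (Fin n) ℂ) : Prop :=
  ∀ i j, (starRingEnd ℂ) (A i j) = A j i

lemma qf_e0 {n : ℕ} (A : Matrix (Fin (n+1)) (Fin (n+1)) ℂ) : qf A e0 = A 0 0 := by
  simp [qf, e0, Finset.sum_ite_eq', Finset.sum_ite_eq]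

lemma nv_e0 {n : ℕ} : nv (e0 (n := n)) = 1 := by
  simp [nv, e0, apply_ite Complex.normSq, Finset.sum_ite_eq']

lemma nv_cons {n : ℕ} (y : ℂ) (x : Fin n → ℂ) :
    nv (Fin.cons y x) = Complex.normSq y + nv x := by
  simp [nv, Fin.sum_univ_succ]

lemma qf_cons {n : ℕ} (A : Matrix (Fin (n+1)) (Fin (n+1)) ℂ) (y : ℂ) (x : Fin n → ℂ) :
    qf A (Fin.cons y x) = (starRingEnd ℂ) y * A 0 0 * y
      + (starRingEnd ℂ) y * (∑ j, A 0 j.succ * x j)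
      + (∑ i, (starRingEnd ℂ) (x i) * A i.succ 0) * y
      + qf (A.submatrix Fin.succ Fin.succ) x := by
  simp [qf, Fin.sum_univ_succ, Finset.mul_sum, Finset.sum_mul, Finset.sum_add_distrib,
    mul_assoc, mul_comm, mul_left_comm]
  ring

lemma qf_schurS {n : ℕ} (η : ℝ) (A : Matrix (Fin (n+1)) (Fin (n+1)) ℂ) (x : Fin n → ℂ) :
    qf (schurS η A) x = qf (A.submatrix Fin.succ Fin.succ) x
      - (((η - 1) / η : ℝ) : ℂ) * ((∑ i, (starRingEnd ℂ) (x i) * A i.succ 0)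
          * (∑ j, A 0 j.succ * x j)) / A 0 0 := by
  simp only [qf, schurS, Matrix.of_apply, Matrix.submatrix_apply, mul_sub, sub_mul,
    Finset.sum_sub_distrib]
  congr 1
  rw [Finset.sum_mul_sum, Finset.mul_sum, Finset.sum_div]
  refine Finset.sum_congr rfl fun i _ => ?_
  rw [Finset.mul_sum, Finset.sum_div]
  refine Finset.sum_congr rfl fun j _ => ?_
  ring

-- scalar inequality
lemma scal0 (k : ℝ) (hk : 0 < k) (u1 u2 s1 s2 : ℝ) :
    0 ≤ (1/k)*(u1^2+u2^2) + 2*(u1*s1+u2*s2) + k*(s1^2+s2^2) := by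
  have h2 : 0 ≤ ((u1+k*s1)^2 + (u2+k*s2)^2)/k := div_nonneg (by positivity) hk.le
  have h3 : ((u1+k*s1)^2 + (u2+k*s2)^2)/k
      = (1/k)*(u1^2+u2^2) + 2*(u1*s1+u2*s2) + k*(s1^2+s2^2) := by
    field_simp; ring
  linarith [h3 ▸ h2]

lemma re_conj_mul (y s : ℂ) : ((starRingEnd ℂ) y * s).re = y.re*s.re + y.im*s.im := by
  simp [Complex.mul_re]

lemma step {n : ℕ} {η : ℝ} (hη : 1 < η) {A B : Matrix (Fin (n+1)) (Fin (n+1)) ℂ}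
    (hA : Herm A) (hB : Herm B) (hApos : 0 < (A 0 0).re) (hBpos : 0 < (B 0 0).re)
    {c : ℝ} (hc : 0 ≤ c)
    (hAB : ∀ v, (qf A v).re + c * nv v ≤ (qf B v).re) :
    ∀ x, (qf (schurS η A) x).re + c * nv x ≤ (qf (schurS η B) x).re := by
  intro x
  set τ : ℝ := (η - 1)/η with hτdef
  have hτ0 : 0 < τ := div_pos (by linarith) (by linarith)
  have hτ1 : τ < 1 := by
    rw [hτdef, div_lt_one (by linarith)]; linarith
  set ar := (A 0 0).re with har
  set br := (B 0 0).re with hbr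
  have haR : A 0 0 = (ar : ℂ) := (Complex.conj_eq_iff_re.mp (hA 0 0)).symm
  have hbR : B 0 0 = (br : ℂ) := (Complex.conj_eq_iff_re.mp (hB 0 0)).symm
  set sA : ℂ := ∑ j, A 0 j.succ * x j with hsA
  set sB : ℂ := ∑ j, B 0 j.succ * x j with hsB
  have htA : (∑ i, (starRingEnd ℂ) (x i) * A i.succ 0) = (starRingEnd ℂ) sA := by
    rw [hsA, map_sum]
    refine Finset.sum_congr rfl fun j _ => ?_
    rw [_root_.map_mul, hA 0 j.succ]; ring
  have htB : (∑ i, (starRingEnd ℂ) (x i) * B i.succ 0) = (starRingEnd ℂ) sB := by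
    rw [hsB, map_sum]
    refine Finset.sum_congr rfl fun j _ => ?_
    rw [_root_.map_mul, hB 0 j.succ]; ring
  -- re formulas for schurS quadratic forms
  have conj_mul_self : ∀ z : ℂ, (starRingEnd ℂ) z * z = (Complex.normSq z : ℂ) := by
    intro z; rw [mul_comm, Complex.mul_conj]
  have reSA : (qf (schurS η A) x).re
      = (qf (A.submatrix Fin.succ Fin.succ) x).re - τ * Complex.normSq sA / ar := by
    rw [qf_schurS, htA, ← hsA, haR, conj_mul_self]
    have : (τ : ℂ) * (Complex.normSq sA : ℂ) / (ar : ℂ)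
        = ((τ * Complex.normSq sA / ar : ℝ) : ℂ) := by push_cast; ring
    rw [this, Complex.sub_re, Complex.ofReal_re]
  have reSB : (qf (schurS η B) x).re
      = (qf (B.submatrix Fin.succ Fin.succ) x).re - τ * Complex.normSq sB / br := by
    rw [qf_schurS, htB, ← hsB, hbR, conj_mul_self]
    have : (τ : ℂ) * (Complex.normSq sB : ℂ) / (br : ℂ)
        = ((τ * Complex.normSq sB / br : ℝ) : ℂ) := by push_cast; ring
    rw [this, Complex.sub_re, Complex.ofReal_re]
  -- the chosen y
  set y : ℂ := -((τ/br : ℝ) : ℂ) * sB with hy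
  -- re formula for qf of cons
  have reconsA : (qf A (Fin.cons y x)).re
      = ar * Complex.normSq y + 2 * ((starRingEnd ℂ) y * sA).re
        + (qf (A.submatrix Fin.succ Fin.succ) x).re := by
    rw [qf_cons, htA, ← hsA, haR]
    have h1 : (starRingEnd ℂ) y * (ar : ℂ) * y = ((ar * Complex.normSq y : ℝ) : ℂ) := by
      rw [show (starRingEnd ℂ) y * (ar : ℂ) * y = (ar : ℂ) * ((starRingEnd ℂ) y * y) by ring,
        conj_mul_self]; push_cast; ring
    rw [h1]
    have h2 : ((starRingEnd ℂ) sA * y).re = ((starRingEnd ℂ) y * sA).re := by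
      simp [Complex.mul_re]; ring
    simp only [Complex.add_re, Complex.ofReal_re, h2]
    ring
  have reconsB : (qf B (Fin.cons y x)).re
      = br * Complex.normSq y + 2 * ((starRingEnd ℂ) y * sB).re
        + (qf (B.submatrix Fin.succ Fin.succ) x).re := by
    rw [qf_cons, htB, ← hsB, hbR]
    have h1 : (starRingEnd ℂ) y * (br : ℂ) * y = ((br * Complex.normSq y : ℝ) : ℂ) := by
      rw [show (starRingEnd ℂ) y * (br : ℂ) * y = (br : ℂ) * ((starRingEnd ℂ) y * y) by ring,
        conj_mul_self]; push_cast; ring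
    rw [h1]
    have h2 : ((starRingEnd ℂ) sB * y).re = ((starRingEnd ℂ) y * sB).re := by
      simp [Complex.mul_re]; ring
    simp only [Complex.add_re, Complex.ofReal_re, h2]
    ring
  -- Fact 2 for A : schur value ≤ cons value + slack
  have fact2 : (qf (schurS η A) x).re
      ≤ (qf A (Fin.cons y x)).re + (1-τ)/τ * ar * Complex.normSq y := by
    rw [reSA, reconsA]
    have key : 0 ≤ (ar/τ) * Complex.normSq y + 2 * ((starRingEnd ℂ) y * sA).re
        + (τ/ar) * Complex.normSq sA := by
      have := scal0 (τ/ar) (div_pos hτ0 hApos) y.re y.im sA.re sA.im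
      have e1 : (1/(τ/ar)) = ar/τ := by field_simp
      rw [e1] at this
      simpa [Complex.normSq_apply, re_conj_mul, pow_two] using this
    have hτne : τ ≠ 0 := ne_of_gt hτ0
    have e2 : ar/τ * Complex.normSq y
        = ar * Complex.normSq y + (1-τ)/τ * ar * Complex.normSq y := by
      field_simp; ring
    have e3 : τ * Complex.normSq sA / ar = (τ/ar) * Complex.normSq sA := by ring
    linarith [key, e2, e3]
  -- Fact 1 for B : equality
  have fact1 : (qf B (Fin.cons y x)).re + (1-τ)/τ * br * Complex.normSq y
      = (qf (schurS η B) x).re := by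
    rw [reSB, reconsB]
    have hnsy : Complex.normSq y = (τ/br)^2 * Complex.normSq sB := by
      rw [hy, Complex.normSq_mul, Complex.normSq_neg, Complex.normSq_ofReal]; ring
    have hrey : ((starRingEnd ℂ) y * sB).re = -(τ/br) * Complex.normSq sB := by
      rw [hy]
      simp only [_root_.map_mul, map_neg, Complex.conj_ofReal, neg_mul, mul_assoc]
      rw [conj_mul_self]
      simp [Complex.mul_re]
    rw [hnsy, hrey]
    have hbrne : br ≠ 0 := ne_of_gt hBpos
    have hτne : τ ≠ 0 := ne_of_gt hτ0
    field_simp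
    ring
  -- a00 ≤ b00
  have harbr : ar + c ≤ br := by
    have := hAB e0
    rw [qf_e0, qf_e0, nv_e0] at this
    simpa [har, hbr] using this
  -- assemble
  have habcons := hAB (Fin.cons y x)
  rw [nv_cons] at habcons
  have hslack : (1-τ)/τ * ar * Complex.normSq y ≤ (1-τ)/τ * br * Complex.normSq y := by
    have h1 : (0:ℝ) ≤ (1-τ)/τ := div_nonneg (by linarith) hτ0.le
    have h0 := Complex.normSq_nonneg y
    have h2 : 0 ≤ (1-τ)/τ * ((br - ar) * Complex.normSq y) :=
      mul_nonneg h1 (mul_nonneg (by linarith) h0)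
    nlinarith [h2]
  have hcy : 0 ≤ c * Complex.normSq y := mul_nonneg hc (Complex.normSq_nonneg y)
  linarith [fact2, habcons, hslack, fact1]

lemma herm_schurS {n : ℕ} (η : ℝ) (A : Matrix (Fin (n+1)) (Fin (n+1)) ℂ)
    (hA : Herm A) : Herm (schurS η A) := by
  intro i j
  simp only [schurS, Matrix.of_apply, map_sub, map_div₀, _root_.map_mul,
    Complex.conj_ofReal, hA i.succ j.succ, hA i.succ 0, hA 0 j.succ, hA 0 0]
  ring

lemma schurS_one {n : ℕ} (η : ℝ) : schurS η (1 : Matrix (Fin (n+1)) (Fin (n+1)) ℂ) = 1 := by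
  ext i j
  simp [schurS, Matrix.one_apply, Fin.succ_ne_zero]

lemma schurS_smul_s8 {n : ℕ} (η : ℝ) (α : ℂ) (hα : α ≠ 0) (A : Matrix (Fin (n+1)) (Fin (n+1)) ℂ) :
    schurS η (α • A) = α • schurS η A := by
  ext i j
  simp only [schurS, Matrix.of_apply, Matrix.smul_apply, smul_eq_mul]
  have key : (((η - 1) / η : ℝ) : ℂ) * ((α * A i.succ 0) * (α * A 0 j.succ)) / (α * A 0 0)
      = α * ((((η - 1) / η : ℝ) : ℂ) * (A i.succ 0 * A 0 j.succ) / A 0 0) := by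
    rw [show (((η - 1) / η : ℝ) : ℂ) * ((α * A i.succ 0) * (α * A 0 j.succ))
        = α * (α * ((((η - 1) / η : ℝ) : ℂ) * (A i.succ 0 * A 0 j.succ))) by ring,
      mul_div_assoc α, mul_div_mul_left _ _ hα, mul_div_assoc]
  rw [key]; ring

def GE1 {n : ℕ} (A : Matrix (Fin n) (Fin n) ℂ) : Prop :=
  ∀ v, nv v ≤ (qf A v).re

lemma qf_one {n : ℕ} (v : Fin n → ℂ) : qf (1 : Matrix (Fin n) (Fin n) ℂ) v = ((nv v : ℝ) : ℂ) := by
  simp only [qf, Matrix.one_apply, nv, mul_ite, mul_one, mul_zero, ite_mul, zero_mul,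
    Finset.sum_ite_eq, Finset.mem_univ, if_true]
  push_cast
  refine Finset.sum_congr rfl fun i _ => ?_
  rw [mul_comm, Complex.mul_conj]

lemma herm_one {n : ℕ} : Herm (1 : Matrix (Fin n) (Fin n) ℂ) := by
  intro i j
  rcases eq_or_ne i j with rfl | hij
  · simp
  · simp [Matrix.one_apply, hij, Ne.symm hij]

lemma ge1_one {n : ℕ} : GE1 (1 : Matrix (Fin n) (Fin n) ℂ) := by
  intro v; rw [qf_one]; simp

lemma ge1_pos {n : ℕ} {A : Matrix (Fin (n+1)) (Fin (n+1)) ℂ} (hA : GE1 A) :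
    0 < (A 0 0).re := by
  have := hA e0
  rw [qf_e0, nv_e0] at this
  linarith

lemma iterT_zero {n : ℕ} (η : ℕ → ℝ) (A : Matrix (Fin (n+0)) (Fin (n+0)) ℂ) :
    iterT 0 η A = A := rfl

lemma iterT_succ {n j : ℕ} (η : ℕ → ℝ) (A : Matrix (Fin (n+(j+1))) (Fin (n+(j+1))) ℂ) :
    iterT (j+1) η A = iterT j (fun i => η (i + 1)) (schurS (η 0) A) := rfl

lemma ge1_schurS {n : ℕ} {η : ℝ} (hη : 1 < η) {A : Matrix (Fin (n+1)) (Fin (n+1)) ℂ}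
    (hA : Herm A) (gA : GE1 A) : GE1 (schurS η A) := by
  have pair0 : ∀ v, (qf (1 : Matrix (Fin (n+1)) (Fin (n+1)) ℂ) v).re + 0 * nv v
      ≤ (qf A v).re := by
    intro v; rw [qf_one]; simpa using gA v
  have := step hη herm_one hA (by simp [Matrix.one_apply]) (ge1_pos gA) le_rfl pair0
  intro x
  have h2 := this x
  rw [schurS_one, qf_one] at h2
  simpa using h2

lemma iterT_one {n : ℕ} (j : ℕ) (η : ℕ → ℝ) :
    iterT (n := n) j η 1 = 1 := by
  induction j generalizing η with
  | zero => rfl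
  | succ j ih => rw [iterT_succ, schurS_one, ih]

lemma iterT_smul {n : ℕ} (j : ℕ) (η : ℕ → ℝ) (α : ℂ) (hα : α ≠ 0)
    (A : Matrix (Fin (n+j)) (Fin (n+j)) ℂ) :
    iterT j η (α • A) = α • iterT j η A := by
  induction j generalizing η with
  | zero => rfl
  | succ j ih => rw [iterT_succ, iterT_succ, schurS_smul_s8 _ _ hα, ih]

lemma iterT_pair {n : ℕ} (j : ℕ) : ∀ (η : ℕ → ℝ), (∀ i, i < j → 1 < η i) →
    ∀ (A B : Matrix (Fin (n+j)) (Fin (n+j)) ℂ) (c : ℝ), 0 ≤ c →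
    Herm A → Herm B → GE1 A → GE1 B →
    (∀ v, (qf A v).re + c * nv v ≤ (qf B v).re) →
    ∀ x, (qf (iterT j η A) x).re + c * nv x ≤ (qf (iterT j η B) x).re := by
  induction j with
  | zero => exact fun η _ A B c _ _ _ _ _ hAB => hAB
  | succ j ih =>
    intro η hη A B c hc hA hB gA gB hAB
    have hη0 : 1 < η 0 := hη 0 (Nat.succ_pos _)
    rw [iterT_succ, iterT_succ]
    exact ih (fun i => η (i+1)) (fun i hi => hη (i+1) (by omega))
      (schurS (η 0) A) (schurS (η 0) B) c hc
      (herm_schurS _ _ hA) (herm_schurS _ _ hB)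
      (ge1_schurS hη0 hA gA) (ge1_schurS hη0 hB gB)
      (step hη0 hA hB (ge1_pos gA) (ge1_pos gB) hc hAB)

lemma qf_add {n : ℕ} (A B : Matrix (Fin n) (Fin n) ℂ) (v : Fin n → ℂ) :
    qf (A + B) v = qf A v + qf B v := by
  simp [qf, Matrix.add_apply, mul_add, add_mul, Finset.sum_add_distrib]

lemma qf_zero {n : ℕ} (v : Fin n → ℂ) : qf (0 : Matrix (Fin n) (Fin n) ℂ) v = 0 := by
  simp [qf]

lemma qf_sum {n : ℕ} {ι : Type*} (s : Finset ι) (f : ι → Matrix (Fin n) (Fin n) ℂ)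
    (v : Fin n → ℂ) : qf (∑ k ∈ s, f k) v = ∑ k ∈ s, qf (f k) v := by
  classical
  induction s using Finset.induction_on with
  | empty => simp [qf_zero]
  | insert a s' hx ih => simp [Finset.sum_insert hx, qf_add, ih]

lemma qf_smul {n : ℕ} (α : ℂ) (A : Matrix (Fin n) (Fin n) ℂ) (v : Fin n → ℂ) :
    qf (α • A) v = α * qf A v := by
  simp only [qf, Matrix.smul_apply, smul_eq_mul, Finset.mul_sum]
  refine Finset.sum_congr rfl fun i _ => Finset.sum_congr rfl fun j _ => by ring

lemma qf_vecMulVec {n : ℕ} (hv : Fin n → ℂ) (v : Fin n → ℂ) :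
    qf (vecMulVec hv (star hv)) v
      = ((Complex.normSq (∑ j, (starRingEnd ℂ) (hv j) * v j) : ℝ) : ℂ) := by
  have expand : qf (vecMulVec hv (star hv)) v
      = (∑ i, (starRingEnd ℂ) (v i) * hv i) * (∑ j, (starRingEnd ℂ) (hv j) * v j) := by
    rw [Finset.sum_mul_sum]
    simp only [qf, vecMulVec_apply, Pi.star_apply, Complex.star_def]
    refine Finset.sum_congr rfl fun i _ => Finset.sum_congr rfl fun j _ => by ring
  rw [expand, show (∑ i, (starRingEnd ℂ) (v i) * hv i)
      = (starRingEnd ℂ) (∑ j, (starRingEnd ℂ) (hv j) * v j) by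
    rw [map_sum]
    exact Finset.sum_congr rfl fun i _ => by rw [_root_.map_mul, Complex.conj_conj]; ring]
  rw [mul_comm, Complex.mul_conj]

lemma reqf_form {M K : ℕ} (h : Fin K → Fin M → ℂ) (β : Fin K → ℝ) (v : Fin M → ℂ) :
    (qf (1 + ∑ k, (β k : ℂ) • vecMulVec (h k) (star (h k))) v).re
      = nv v + ∑ k, β k * Complex.normSq (∑ j, (starRingEnd ℂ) (h k j) * v j) := by
  rw [qf_add, qf_one, qf_sum]
  simp only [qf_smul, qf_vecMulVec]
  rw [Complex.add_re, Complex.ofReal_re]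
  congr 1
  rw [Complex.re_sum]
  refine Finset.sum_congr rfl fun k _ => ?_
  rw [← Complex.ofReal_mul, Complex.ofReal_re]

lemma herm_form {M K : ℕ} (h : Fin K → Fin M → ℂ) (β : Fin K → ℝ) :
    Herm (1 + ∑ k, (β k : ℂ) • vecMulVec (h k) (star (h k))) := by
  intro i j
  simp only [Matrix.add_apply, Matrix.sum_apply, Matrix.smul_apply, vecMulVec_apply,
    Pi.star_apply, Complex.star_def, smul_eq_mul, map_add, map_sum, _root_.map_mul,
    Complex.conj_ofReal, Complex.conj_conj]
  rw [herm_one i j]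
  congr 1
  refine Finset.sum_congr rfl fun k _ => by ring

lemma qf_reindex {M N : ℕ} (e : Fin M ≃ Fin N) (A : Matrix (Fin M) (Fin M) ℂ)
    (v : Fin N → ℂ) : qf (Matrix.reindex e e A) v = qf A (fun i => v (e i)) := by
  simp only [qf, Matrix.reindex_apply, Matrix.submatrix_apply]
  rw [← Equiv.sum_comp e (fun i => ∑ j, (starRingEnd ℂ) (v i) * A (e.symm i) (e.symm j) * v j)]
  refine Finset.sum_congr rfl fun i _ => ?_
  rw [← Equiv.sum_comp e (fun j => (starRingEnd ℂ) (v (e i)) * A (e.symm (e i)) (e.symm j) * v j)]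
  simp [Equiv.symm_apply_apply]

lemma nv_comp {M N : ℕ} (e : Fin M ≃ Fin N) (v : Fin N → ℂ) :
    nv (fun i => v (e i)) = nv v := by
  simpa [nv] using Equiv.sum_comp e (fun i => Complex.normSq (v i))

lemma herm_reindex {M N : ℕ} (e : Fin M ≃ Fin N) (A : Matrix (Fin M) (Fin M) ℂ)
    (hA : Herm A) : Herm (Matrix.reindex e e A) := by
  intro i j
  simp only [Matrix.reindex_apply, Matrix.submatrix_apply]
  exact hA _ _

lemma herm_smul_real {n : ℕ} (α : ℝ) (A : Matrix (Fin n) (Fin n) ℂ) (hA : Herm A) :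
    Herm ((α : ℂ) • A) := by
  intro i j
  simp only [Matrix.smul_apply, smul_eq_mul, _root_.map_mul, Complex.conj_ofReal, hA i j]

lemma nv_nonneg {n : ℕ} (v : Fin n → ℂ) : 0 ≤ nv v :=
  Finset.sum_nonneg fun i _ => Complex.normSq_nonneg _

/-- paper's Lemma 5: the diagonal dual multipliers
`L_m(β) = (η_m − 1)⁻¹ (T_m(Γ(β)))^{(1,1)}` are positive, strictly subhomogeneous and
monotone in `β`.  Here `m = j + 1` (so `T_m` performs `j` elimination steps) and
`M = (r + 1) + j`, so that `T_m(Γ(β))` has size `(r + 1) × (r + 1)`. -/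
theorem stmt8 (M K : ℕ) (hM : 2 ≤ M) (hK : 1 ≤ K)
    (h : Fin K → Fin M → ℂ) (η : Fin M → ℝ) (hη : ∀ m, 1 < η m)
    (Γ : (Fin K → ℝ) → Matrix (Fin M) (Fin M) ℂ)
    (hΓ : ∀ β, Γ β = 1 + ∑ k, (β k : ℂ) • vecMulVec (h k) (star (h k)))
    (j r : ℕ) (hjr : M = (r + 1) + j)
    (L : (Fin K → ℝ) → ℝ)
    (hL : ∀ β, L β = (η ⟨j, by omega⟩ - 1)⁻¹ *
      ((iterT j (fun i => if hi : i < M then η ⟨i, hi⟩ else 1)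
        (Matrix.reindex (finCongr hjr) (finCongr hjr) (Γ β))) 0 0).re) :
    (∀ β : Fin K → ℝ, (∀ k, 0 ≤ β k) → 0 < L β) ∧
    (∀ α : ℝ, 1 < α → ∀ β : Fin K → ℝ, (∀ k, 0 ≤ β k) → β ≠ 0 → L (α • β) < α * L β) ∧
    (∀ β₁ β₂ : Fin K → ℝ, (∀ k, 0 ≤ β₂ k) → (∀ k, β₂ k ≤ β₁ k) → L β₂ ≤ L β₁) := by
  have hjM : j < M := by omega
  set ηf : ℕ → ℝ := fun i => if hi : i < M then η ⟨i, hi⟩ else 1 with hηfdef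
  have hηfj : ∀ i, i < j → 1 < ηf i := by
    intro i hi
    have hiM : i < M := by omega
    rw [hηfdef]
    simp only [dif_pos hiM]
    exact hη _
  have hinv : 0 < η ⟨j, hjM⟩ - 1 := by have := hη ⟨j, hjM⟩; linarith
  set e : Fin M ≃ Fin ((r+1)+j) := finCongr hjr with hedef
  -- notation for the reindexed matrices
  have reqfA : ∀ (β : Fin K → ℝ) (v : Fin ((r+1)+j) → ℂ),
      (qf (Matrix.reindex e e (Γ β)) v).re
        = nv v + ∑ k, β k * Complex.normSq (∑ jj, (starRingEnd ℂ) (h k jj) * v (e jj)) := by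
    intro β v
    rw [hΓ β, qf_reindex, reqf_form, nv_comp]
  have hermA : ∀ β : Fin K → ℝ, Herm (Matrix.reindex e e (Γ β)) := by
    intro β
    rw [hΓ β]
    exact herm_reindex e _ (herm_form h β)
  have ge1A : ∀ β : Fin K → ℝ, (∀ k, 0 ≤ β k) → GE1 (Matrix.reindex e e (Γ β)) := by
    intro β hβ v
    rw [reqfA]
    exact le_add_of_nonneg_right (Finset.sum_nonneg fun k _ =>
      mul_nonneg (hβ k) (Complex.normSq_nonneg _))
  -- entry lower bound 1 (part a core)
  have hX1 : ∀ β : Fin K → ℝ, (∀ k, 0 ≤ β k) →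
      1 ≤ ((iterT j ηf (Matrix.reindex e e (Γ β))) 0 0).re := by
    intro β hβ
    have pair0 : ∀ v, (qf (1 : Matrix (Fin ((r+1)+j)) (Fin ((r+1)+j)) ℂ) v).re + 0 * nv v
        ≤ (qf (Matrix.reindex e e (Γ β)) v).re := by
      intro v; rw [qf_one]; simpa using ge1A β hβ v
    have pr := iterT_pair j ηf hηfj 1 (Matrix.reindex e e (Γ β)) 0 le_rfl herm_one
      (hermA β) ge1_one (ge1A β hβ) pair0 e0
    rw [iterT_one, qf_one, nv_e0, qf_e0] at pr
    simpa using pr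
  refine ⟨?_, ?_, ?_⟩
  · -- positivity
    intro β hβ
    rw [hL β]
    exact mul_pos (inv_pos.mpr hinv) (by linarith [hX1 β hβ])
  · -- strict subhomogeneity
    intro α hα β hβ _
    rw [hL (α • β), hL β]
    have hβα : ∀ k, 0 ≤ (α • β) k := by
      intro k
      have := hβ k
      simp only [Pi.smul_apply, smul_eq_mul]
      nlinarith
    have hαC : ((α : ℝ) : ℂ) ≠ 0 := Complex.ofReal_ne_zero.mpr (by linarith)
    have hpair : ∀ v, (qf (Matrix.reindex e e (Γ (α • β))) v).re + (α - 1) * nv v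
        ≤ (qf ((α : ℂ) • Matrix.reindex e e (Γ β)) v).re := by
      intro v
      rw [reqfA, qf_smul, Complex.re_ofReal_mul, reqfA]
      have hs : ∑ k, (α • β) k * Complex.normSq (∑ jj, (starRingEnd ℂ) (h k jj) * v (e jj))
          = α * ∑ k, β k * Complex.normSq (∑ jj, (starRingEnd ℂ) (h k jj) * v (e jj)) := by
        rw [Finset.mul_sum]
        refine Finset.sum_congr rfl fun k _ => ?_
        simp only [Pi.smul_apply, smul_eq_mul]; ring
      rw [hs]
      ring_nf
      nlinarith [nv_nonneg v]
    have ge1B : GE1 ((α : ℂ) • Matrix.reindex e e (Γ β)) := by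
      intro v
      rw [qf_smul, Complex.re_ofReal_mul]
      have h1 := ge1A β hβ v
      nlinarith [nv_nonneg v]
    have pr := iterT_pair j ηf hηfj (Matrix.reindex e e (Γ (α • β)))
      ((α : ℂ) • Matrix.reindex e e (Γ β)) (α - 1) (by linarith)
      (hermA (α • β)) (herm_smul_real α _ (hermA β)) (ge1A (α • β) hβα) ge1B hpair e0
    rw [nv_e0, qf_e0, iterT_smul j ηf _ hαC, qf_smul, qf_e0, Complex.re_ofReal_mul] at pr
    set X := ((iterT j ηf (Matrix.reindex e e (Γ β))) 0 0).re
    set X' := ((iterT j ηf (Matrix.reindex e e (Γ (α • β)))) 0 0).re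
    have hXlt : X' < α * X := by linarith
    have := mul_lt_mul_of_pos_left hXlt (inv_pos.mpr hinv)
    linarith [this]
  · -- monotonicity
    intro β₁ β₂ hβ₂ hle
    rw [hL β₁, hL β₂]
    have hβ₁ : ∀ k, 0 ≤ β₁ k := fun k => le_trans (hβ₂ k) (hle k)
    have hpair : ∀ v, (qf (Matrix.reindex e e (Γ β₂)) v).re + 0 * nv v
        ≤ (qf (Matrix.reindex e e (Γ β₁)) v).re := by
      intro v
      rw [reqfA, reqfA, zero_mul, add_zero]
      exact add_le_add le_rfl (Finset.sum_le_sum fun k _ =>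
        mul_le_mul_of_nonneg_right (hle k) (Complex.normSq_nonneg _))
    have pr := iterT_pair j ηf hηfj (Matrix.reindex e e (Γ β₂))
      (Matrix.reindex e e (Γ β₁)) 0 le_rfl (hermA β₂) (hermA β₁)
      (ge1A β₂ hβ₂) (ge1A β₁ hβ₁) hpair e0
    rw [qf_e0, qf_e0] at pr
    have : ((iterT j ηf (Matrix.reindex e e (Γ β₂))) 0 0).re
        ≤ ((iterT j ηf (Matrix.reindex e e (Γ β₁))) 0 0).re := by simpa using pr
    exact mul_le_mul_of_nonneg_left this (le_of_lt (inv_pos.mpr hinv))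
end

section
/- Let K ≥ 1 and let I : ℝ_{++}^K → ℝ_{++}^K be a map on the positive orthant that is monotone, i.e., β ≤ β̃ componentwise implies I(β) ≤ I(β̃) componentwise. Then for all β, β̃ ∈ ℝ_{++}^K, writing α = e^{μ(β, β̃)}, one has μ(I(β), I(β̃)) ≤ max over k ∈ {1,…,K} of max{ ln( I_k(α·β̃) / I_k(β̃) ), ln( I_k(α·β) / I_k(β) ) }. -/
/-- paper's Lemma 1: for a monotone self-map `I` of the positive orthant, with
`μ` Thompson's part metric and `α = e^{μ(β, β̃)}`,
`μ(I(β), I(β̃)) ≤ max_k max { ln (I_k(α β̃) / I_k(β̃)), ln (I_k(α β) / I_k(β)) }`. -/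
theorem stmt9 (K : ℕ) (hK : 1 ≤ K)
    (I : (Fin K → ℝ) → (Fin K → ℝ))
    (hpos : ∀ β : Fin K → ℝ, (∀ k, 0 < β k) → ∀ k, 0 < I β k)
    (hmono : ∀ β β' : Fin K → ℝ, (∀ k, 0 < β k) → (∀ k, 0 < β' k) →
      (∀ k, β k ≤ β' k) → ∀ k, I β k ≤ I β' k)
    (β β' : Fin K → ℝ) (hβ : ∀ k, 0 < β k) (hβ' : ∀ k, 0 < β' k)
    (μ : (Fin K → ℝ) → (Fin K → ℝ) → ℝ)
    (hμ : ∀ x y : Fin K → ℝ, μ x y = ⨆ k : Fin K, |Real.log (x k / y k)|)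
    (α : ℝ) (hα : α = Real.exp (μ β β')) :
    μ (I β) (I β') ≤
      ⨆ k : Fin K, max (Real.log (I (α • β') k / I β' k)) (Real.log (I (α • β) k / I β k)) := by
  haveI : Nonempty (Fin K) := ⟨⟨0, hK⟩⟩
  have hαpos : 0 < α := hα ▸ Real.exp_pos _
  have hlogα : Real.log α = μ β β' := by rw [hα, Real.log_exp]
  have hbdd : BddAbove (Set.range fun k : Fin K => |Real.log (β k / β' k)|) :=
    Set.Finite.bddAbove (Set.finite_range _)
  have habs : ∀ k, |Real.log (β k / β' k)| ≤ Real.log α := by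
    intro k
    rw [hlogα, hμ]
    exact le_ciSup hbdd k
  -- β ≤ α • β' and β' ≤ α • β
  have h1 : ∀ k, β k ≤ (α • β') k := by
    intro k
    have hlog : Real.log (β k / β' k) ≤ Real.log α := (abs_le.mp (habs k)).2
    have := Real.exp_le_exp.mpr hlog
    rw [Real.exp_log (div_pos (hβ k) (hβ' k)), Real.exp_log hαpos] at this
    have := (div_le_iff₀ (hβ' k)).mp this
    simpa [Pi.smul_apply, smul_eq_mul] using this
  have h2 : ∀ k, β' k ≤ (α • β) k := by
    intro k
    have hlog : Real.log (β' k / β k) ≤ Real.log α := by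
      have := (abs_le.mp (habs k)).1
      have hβne : β' k ≠ 0 := (hβ' k).ne'
      have hβne2 : β k ≠ 0 := (hβ k).ne'
      have : -(Real.log α) ≤ Real.log (β k / β' k) := this
      have h' : Real.log (β' k / β k) = -Real.log (β k / β' k) := by
        rw [Real.log_div hβne2 hβne, Real.log_div hβne hβne2]; ring
      linarith
    have := Real.exp_le_exp.mpr hlog
    rw [Real.exp_log (div_pos (hβ' k) (hβ k)), Real.exp_log hαpos] at this
    have := (div_le_iff₀ (hβ k)).mp this
    simpa [Pi.smul_apply, smul_eq_mul] using this
  have hαβpos : ∀ k, 0 < (α • β) k := fun k => by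
    simpa [Pi.smul_apply, smul_eq_mul] using mul_pos hαpos (hβ k)
  have hαβ'pos : ∀ k, 0 < (α • β') k := fun k => by
    simpa [Pi.smul_apply, smul_eq_mul] using mul_pos hαpos (hβ' k)
  have hI1 : ∀ k, I β k ≤ I (α • β') k := hmono β (α • β') hβ hαβ'pos h1
  have hI2 : ∀ k, I β' k ≤ I (α • β) k := hmono β' (α • β) hβ' hαβpos h2
  rw [hμ]
  apply ciSup_le
  intro k
  have hbdd2 : BddAbove (Set.range fun k : Fin K =>
      max (Real.log (I (α • β') k / I β' k)) (Real.log (I (α • β) k / I β k))) :=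
    Set.Finite.bddAbove (Set.finite_range _)
  refine le_trans ?_ (le_ciSup hbdd2 k)
  rw [abs_le]
  constructor
  · -- -(max ...) ≤ log (I β k / I β' k), i.e. log(Iβ'/Iβ) ≤ max
    have hle : Real.log (I β' k / I β k) ≤ Real.log (I (α • β) k / I β k) :=
      Real.log_le_log (div_pos (hpos β' hβ' k) (hpos β hβ k))
        ((div_le_div_iff_of_pos_right (hpos β hβ k)).mpr (hI2 k))
    have heq : Real.log (I β k / I β' k) = -Real.log (I β' k / I β k) := by
      rw [Real.log_div (hpos β hβ k).ne' (hpos β' hβ' k).ne',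
        Real.log_div (hpos β' hβ' k).ne' (hpos β hβ k).ne']; ring
    have hmax : Real.log (I β' k / I β k) ≤
        max (Real.log (I (α • β') k / I β' k)) (Real.log (I (α • β) k / I β k)) :=
      le_trans hle (le_max_right _ _)
    linarith [heq]
  · exact le_trans (Real.log_le_log (div_pos (hpos β hβ k) (hpos β' hβ' k))
      ((div_le_div_iff_of_pos_right (hpos β' hβ' k)).mpr (hI1 k))) (le_max_left _ _)
end

section
/- Let M ≥ 1, let D be an M×M Hermitian positive semidefinite complex matrix, let h ∈ ℂ^M be nonzero, and let α ≥ 1 be real. Then h† (I_M + D)^{-1} h ≤ ((1 + α·‖D‖) / (1 + ‖D‖)) · h† (I_M + α·D)^{-1} h, where ‖D‖ denotes the spectral norm (largest eigenvalue) of D. -/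
open Matrix
open scoped ComplexOrder

section aux

variable {M : ℕ}

/-- quadratic form of a complex diagonal matrix with real entries -/
lemma diag_quad_re (r : Fin M → ℝ) (g : Fin M → ℂ) :
    (star g ⬝ᵥ ((diagonal (fun i => (r i : ℂ))) *ᵥ g)).re
      = ∑ i, r i * Complex.normSq (g i) := by
  simp only [dotProduct, mulVec_diagonal, Pi.star_apply]
  rw [Complex.re_sum]
  refine Finset.sum_congr rfl fun i _ => ?_
  have : star (g i) * ((r i : ℂ) * g i)
      = (r i : ℂ) * ((starRingEnd ℂ) (g i) * g i) := by
    simp only [show star (g i) = (starRingEnd ℂ) (g i) from rfl]; ring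
  rw [this, ← Complex.normSq_eq_conj_mul_self, ← Complex.ofReal_mul, Complex.ofReal_re]

/-- inverse of U diag U* for unitary U -/
lemma unitary_diag_inv (U : Matrix.unitaryGroup (Fin M) ℂ) (d : Fin M → ℂ)
    (hd : ∀ i, d i ≠ 0) :
    ((U : Matrix (Fin M) (Fin M) ℂ) * diagonal d * star (U : Matrix (Fin M) (Fin M) ℂ))⁻¹
      = (U : Matrix (Fin M) (Fin M) ℂ) * diagonal (fun i => (d i)⁻¹)
          * star (U : Matrix (Fin M) (Fin M) ℂ) := by
  apply Matrix.inv_eq_right_inv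
  have h1 : star (U : Matrix (Fin M) (Fin M) ℂ) * (U : Matrix (Fin M) (Fin M) ℂ) = 1 :=
    Matrix.mem_unitaryGroup_iff'.mp U.2
  have h2 : (U : Matrix (Fin M) (Fin M) ℂ) * star (U : Matrix (Fin M) (Fin M) ℂ) = 1 :=
    Matrix.mem_unitaryGroup_iff.mp U.2
  calc (U : Matrix (Fin M) (Fin M) ℂ) * diagonal d * star (U : Matrix (Fin M) (Fin M) ℂ)
        * ((U : Matrix (Fin M) (Fin M) ℂ) * diagonal (fun i => (d i)⁻¹)
          * star (U : Matrix (Fin M) (Fin M) ℂ))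
      = (U : Matrix (Fin M) (Fin M) ℂ) * (diagonal d
          * (star (U : Matrix (Fin M) (Fin M) ℂ) * (U : Matrix (Fin M) (Fin M) ℂ))
          * diagonal (fun i => (d i)⁻¹)) * star (U : Matrix (Fin M) (Fin M) ℂ) := by
        simp only [Matrix.mul_assoc]
    _ = 1 := by
        rw [h1, Matrix.mul_one, diagonal_mul_diagonal]
        have : (fun i => d i * (d i)⁻¹) = fun _ => (1 : ℂ) := by
          funext i; exact mul_inv_cancel₀ (hd i)
        rw [this, diagonal_one, Matrix.mul_one, h2]

end aux

/-- Eq. (50) of the paper: for a Hermitian positive semidefinite `D`,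
a nonzero vector `h` and `α ≥ 1`,
`hᴴ (I + D)⁻¹ h ≤ ((1 + α‖D‖)/(1 + ‖D‖)) · hᴴ (I + αD)⁻¹ h`,
where `‖D‖` is the largest eigenvalue of `D`. -/
theorem stmt10 (M : ℕ) (hM : 1 ≤ M)
    (D : Matrix (Fin M) (Fin M) ℂ) (hD : D.PosSemidef)
    (h : Fin M → ℂ) (hh : h ≠ 0) (α : ℝ) (hα : 1 ≤ α)
    (lam : ℝ) (hlam : lam = ⨆ i : Fin M, hD.1.eigenvalues i) :
    (star h ⬝ᵥ ((1 + D)⁻¹ *ᵥ h)).re ≤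
      ((1 + α * lam) / (1 + lam)) * (star h ⬝ᵥ ((1 + (α : ℂ) • D)⁻¹ *ᵥ h)).re := by
  classical
  haveI : Nonempty (Fin M) := ⟨⟨0, hM⟩⟩
  set U := hD.1.eigenvectorUnitary with hU
  set Um : Matrix (Fin M) (Fin M) ℂ := (U : Matrix (Fin M) (Fin M) ℂ)
  set ev := hD.1.eigenvalues with hev
  have hspec : D = Um * diagonal (RCLike.ofReal ∘ ev) * star Um := hD.1.spectral_theorem
  have h2 : Um * star Um = 1 := Matrix.mem_unitaryGroup_iff.mp U.2
  have hev0 : ∀ i, 0 ≤ ev i := fun i => hD.eigenvalues_nonneg i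
  have hevlam : ∀ i, ev i ≤ lam := by
    intro i
    rw [hlam]
    exact le_ciSup (Set.Finite.bddAbove (Set.finite_range _)) i
  have hlam0 : 0 ≤ lam := le_trans (hev0 ⟨0, hM⟩) (hevlam ⟨0, hM⟩)
  -- rewrite 1 + D and 1 + α•D in diagonalized form
  have hone : (1 : Matrix (Fin M) (Fin M) ℂ) = Um * diagonal (fun _ => 1) * star Um := by
    rw [diagonal_one, Matrix.mul_one, h2]
  have hsum : (1 : Matrix (Fin M) (Fin M) ℂ) + D
      = Um * diagonal (fun i => ((1 + ev i : ℝ) : ℂ)) * star Um := by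
    rw [hone, hspec, ← Matrix.add_mul, ← Matrix.mul_add]
    congr 2
    rw [diagonal_add]
    congr 1
    funext i
    simp
  have hsumα : (1 : Matrix (Fin M) (Fin M) ℂ) + (α : ℂ) • D
      = Um * diagonal (fun i => ((1 + α * ev i : ℝ) : ℂ)) * star Um := by
    rw [hone, hspec, ← Matrix.smul_mul, ← mul_smul_comm, ← diagonal_smul,
      ← Matrix.add_mul, ← Matrix.mul_add]
    congr 2
    rw [diagonal_add]
    congr 1
    funext i
    simp [Complex.real_smul]
  have hpos1 : ∀ i, (0:ℝ) < 1 + ev i := fun i => by linarith [hev0 i]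
  have hposα : ∀ i, (0:ℝ) < 1 + α * ev i := fun i => by nlinarith [hev0 i]
  have hinv1 : ((1 : Matrix (Fin M) (Fin M) ℂ) + D)⁻¹
      = Um * diagonal (fun i => (((1 + ev i)⁻¹ : ℝ) : ℂ)) * star Um := by
    rw [hsum, unitary_diag_inv U _ (fun i => by
      simpa using (Complex.ofReal_ne_zero.mpr (ne_of_gt (hpos1 i))))]
    congr 1
    congr 1
    funext i
    push_cast
    ring
  have hinvα : ((1 : Matrix (Fin M) (Fin M) ℂ) + (α : ℂ) • D)⁻¹
      = Um * diagonal (fun i => (((1 + α * ev i)⁻¹ : ℝ) : ℂ)) * star Um := by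
    rw [hsumα, unitary_diag_inv U _ (fun i => by
      simpa using (Complex.ofReal_ne_zero.mpr (ne_of_gt (hposα i))))]
    congr 1
    congr 1
    funext i
    push_cast
    ring
  -- reduce quadratic forms
  set g : Fin M → ℂ := star Um *ᵥ h with hg
  have hstarg : star g = star h ᵥ* Um := by
    rw [hg, star_mulVec, star_eq_conjTranspose, conjTranspose_conjTranspose]
  have quad : ∀ r : Fin M → ℝ,
      (star h ⬝ᵥ ((Um * diagonal (fun i => ((r i : ℝ) : ℂ)) * star Um) *ᵥ h)).re
        = ∑ i, r i * Complex.normSq (g i) := by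
    intro r
    rw [← Matrix.mulVec_mulVec, ← Matrix.mulVec_mulVec, Matrix.dotProduct_mulVec (star h) Um,
      ← hstarg]
    exact diag_quad_re r g
  rw [hinv1, hinvα, quad, quad]
  -- now a real-sum inequality
  rw [Finset.mul_sum]
  apply Finset.sum_le_sum
  intro i _
  have hn : 0 ≤ Complex.normSq (g i) := Complex.normSq_nonneg _
  have key : (1 + ev i)⁻¹ ≤ (1 + α * lam) / (1 + lam) * (1 + α * ev i)⁻¹ := by
    rw [inv_eq_one_div, inv_eq_one_div, div_mul_div_comm, mul_one,
      div_le_div_iff₀ (hpos1 i) (mul_pos (by linarith) (hposα i))]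
    nlinarith [hevlam i, hev0 i, hlam0]
  calc (1 + ev i)⁻¹ * Complex.normSq (g i)
      ≤ ((1 + α * lam) / (1 + lam) * (1 + α * ev i)⁻¹) * Complex.normSq (g i) :=
        mul_le_mul_of_nonneg_right key hn
    _ = (1 + α * lam) / (1 + lam) * ((1 + α * ev i)⁻¹ * Complex.normSq (g i)) := by ring
end

section
/- Let M ≥ 1, let α > 1 be real, let D and D′ be M×M Hermitian positive semidefinite complex matrices such that α·D − D′ is positive definite, and let h ∈ ℂ^M be nonzero. Then h† (I_M + D)^{-1} h < ((1 + α·‖D‖) / (1 + ‖D‖)) · h† (I_M + D′)^{-1} h, where ‖D‖ denotes the spectral norm (largest eigenvalue) of D. -/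
open Matrix
open scoped ComplexOrder

lemma stmt11_aux_inv_lt {n : ℕ} (A B : Matrix (Fin n) (Fin n) ℂ) (hA : A.PosDef) (hB : B.PosDef)
    (hAB : (A - B).PosDef) (h : Fin n → ℂ) (hh : h ≠ 0) :
    (star h ⬝ᵥ (A⁻¹ *ᵥ h)).re < (star h ⬝ᵥ (B⁻¹ *ᵥ h)).re := by
  have hdA : IsUnit A.det := (Matrix.isUnit_iff_isUnit_det A).mp hA.isUnit
  have hdB : IsUnit B.det := (Matrix.isUnit_iff_isUnit_det B).mp hB.isUnit
  set v := A⁻¹ *ᵥ h with hvdef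
  set b := B⁻¹ *ᵥ h with hbdef
  have hAv : A *ᵥ v = h := by rw [hvdef, mulVec_mulVec, Matrix.mul_nonsing_inv _ hdA, one_mulVec]
  have hBb : B *ᵥ b = h := by rw [hbdef, mulVec_mulVec, Matrix.mul_nonsing_inv _ hdB, one_mulVec]
  have hv : v ≠ 0 := by
    intro h0
    exact hh (by rw [← hAv, h0, mulVec_zero])
  have e1 : star b ᵥ* B = star h :=
    calc star b ᵥ* B = star b ᵥ* Bᴴ := by rw [hB.isHermitian.eq]
      _ = star (B *ᵥ b) := (star_mulVec _ _).symm
      _ = star h := by rw [hBb]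
  have ebv : star b ⬝ᵥ (B *ᵥ v) = star h ⬝ᵥ v := by
    rw [dotProduct_mulVec, e1]
  have key : star (v - b) ⬝ᵥ (B *ᵥ (v - b)) + star v ⬝ᵥ ((A - B) *ᵥ v)
      = star b ⬝ᵥ h - star h ⬝ᵥ v := by
    simp only [star_sub, mulVec_sub, sub_mulVec, sub_dotProduct, dotProduct_sub, hAv, hBb, ebv]
    ring
  have h1 : (0 : ℂ) ≤ star (v - b) ⬝ᵥ (B *ᵥ (v - b)) := hB.posSemidef.dotProduct_mulVec_nonneg (v - b)
  have h2 : (0 : ℂ) < star v ⬝ᵥ ((A - B) *ᵥ v) := hAB.dotProduct_mulVec_pos hv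
  have hsum : (0 : ℂ) < star b ⬝ᵥ h - star h ⬝ᵥ v := by
    rw [← key]
    exact add_pos_of_nonneg_of_pos h1 h2
  have hre : 0 < (star b ⬝ᵥ h).re - (star h ⬝ᵥ v).re := by
    have := (Complex.lt_def.mp hsum).1
    simpa [Complex.sub_re] using this
  have hconj : (star h ⬝ᵥ b).re = (star b ⬝ᵥ h).re := by
    rw [star_dotProduct]
    simp [Complex.star_def]
  linarith


/-- paper's Lemma 2 in matrix form: if `D, D'` are Hermitian positive
semidefinite with `α D − D'` positive definite (`α > 1`) and `h ≠ 0`, then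
`hᴴ (I + D)⁻¹ h < ((1 + α‖D‖)/(1 + ‖D‖)) · hᴴ (I + D')⁻¹ h`,
where `‖D‖` is the largest eigenvalue of `D`. -/
theorem stmt11 (M : ℕ) (hM : 1 ≤ M) (α : ℝ) (hα : 1 < α)
    (D D' : Matrix (Fin M) (Fin M) ℂ) (hD : D.PosSemidef) (hD' : D'.PosSemidef)
    (hDD' : ((α : ℂ) • D - D').PosDef)
    (h : Fin M → ℂ) (hh : h ≠ 0)
    (lam : ℝ) (hlam : lam = ⨆ i : Fin M, hD.1.eigenvalues i) :
    (star h ⬝ᵥ ((1 + D)⁻¹ *ᵥ h)).re <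
      ((1 + α * lam) / (1 + lam)) * (star h ⬝ᵥ ((1 + D')⁻¹ *ᵥ h)).re := by
  have : Nonempty (Fin M) := ⟨⟨0, hM⟩⟩
  set U : Matrix (Fin M) (Fin M) ℂ := (hD.1.eigenvectorUnitary : Matrix (Fin M) (Fin M) ℂ)
    with hUdef
  set μ : Fin M → ℝ := hD.1.eigenvalues with hμdef
  have hμ0 : ∀ i, 0 ≤ μ i := fun i => hD.eigenvalues_nonneg i
  have hμlam : ∀ i, μ i ≤ lam := by
    intro i
    rw [hlam]
    exact le_ciSup (Set.Finite.bddAbove (Set.finite_range _)) i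
  have hlam0 : 0 ≤ lam := le_trans (hμ0 ⟨0, hM⟩) (hμlam ⟨0, hM⟩)
  have hUU : U * star U = 1 := Matrix.mem_unitaryGroup_iff.mp hD.1.eigenvectorUnitary.2
  have hUU' : star U * U = 1 := Matrix.mem_unitaryGroup_iff'.mp hD.1.eigenvectorUnitary.2
  have hspec : D = U * diagonal (fun i => (μ i : ℂ)) * star U := hD.1.spectral_theorem
  set g : Fin M → ℂ := star U *ᵥ h with hgdef
  -- decomposition of 1 + c • D
  have hDecomp : ∀ c : ℝ, 1 + (c : ℂ) • D
      = U * diagonal (fun i => ((1 + c * μ i : ℝ) : ℂ)) * star U := by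
    intro c
    have hd : diagonal (fun i => ((1 + c * μ i : ℝ) : ℂ))
        = 1 + (c : ℂ) • diagonal (fun i => (μ i : ℂ)) := by
      simp only [← diagonal_smul, ← diagonal_one, diagonal_add]
      congr 1
      ext i
      simp only [Pi.smul_apply, smul_eq_mul]
      push_cast
      ring
    rw [hd, mul_add, add_mul, Matrix.mul_one, hUU, mul_smul_comm, smul_mul_assoc, hspec]
  -- inverse of such decompositions
  have hInv : ∀ f : Fin M → ℝ, (∀ i, 0 < f i) →
      (U * diagonal (fun i => ((f i : ℝ) : ℂ)) * star U)⁻¹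
        = U * diagonal (fun i => (((f i)⁻¹ : ℝ) : ℂ)) * star U := by
    intro f hf
    apply inv_eq_right_inv
    calc U * diagonal (fun i => ((f i : ℝ) : ℂ)) * star U
          * (U * diagonal (fun i => (((f i)⁻¹ : ℝ) : ℂ)) * star U)
        = U * (diagonal (fun i => ((f i : ℝ) : ℂ)) * (star U * U)
            * diagonal (fun i => (((f i)⁻¹ : ℝ) : ℂ))) * star U := by
          simp only [Matrix.mul_assoc]
      _ = U * (diagonal (fun i => ((f i : ℝ) : ℂ)) * diagonal (fun i => (((f i)⁻¹ : ℝ) : ℂ)))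
            * star U := by rw [hUU', Matrix.mul_one, Matrix.mul_assoc]
      _ = 1 := by
          rw [diagonal_mul_diagonal]
          have : (fun i => ((f i : ℝ) : ℂ) * (((f i)⁻¹ : ℝ) : ℂ)) = fun _ => (1 : ℂ) := by
            ext i
            rw [← Complex.ofReal_mul, mul_inv_cancel₀ (hf i).ne']
            simp
          rw [this, diagonal_one, Matrix.mul_one, hUU]
  -- quadratic form of such decompositions
  have hquad : ∀ f : Fin M → ℝ,
      (star h ⬝ᵥ ((U * diagonal (fun i => ((f i : ℝ) : ℂ)) * star U) *ᵥ h)).re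
        = ∑ i, f i * Complex.normSq (g i) := by
    intro f
    have e1 : (U * diagonal (fun i => ((f i : ℝ) : ℂ)) * star U) *ᵥ h
        = U *ᵥ (diagonal (fun i => ((f i : ℝ) : ℂ)) *ᵥ g) := by
      rw [hgdef, mulVec_mulVec, mulVec_mulVec, Matrix.mul_assoc]
    rw [e1, dotProduct_mulVec]
    have e2 : star h ᵥ* U = star g := by
      rw [hgdef, star_mulVec, star_eq_conjTranspose, conjTranspose_conjTranspose]
    rw [e2]
    simp only [dotProduct, mulVec_diagonal, Complex.re_sum]
    refine Finset.sum_congr rfl fun i _ => ?_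
    have : star (g i) * (((f i : ℝ) : ℂ) * g i)
        = ((f i : ℝ) : ℂ) * ((Complex.normSq (g i) : ℝ) : ℂ) := by
      rw [Complex.star_def]
      rw [show (starRingEnd ℂ) (g i) * (((f i : ℝ) : ℂ) * g i)
        = ((f i : ℝ) : ℂ) * (g i * (starRingEnd ℂ) (g i)) by ring, Complex.mul_conj]
    rw [Pi.star_apply, this, ← Complex.ofReal_mul, Complex.ofReal_re]
  -- compute the two quadratic forms over D
  have hf1 : ∀ i, 0 < 1 + (1:ℝ) * μ i := fun i => by nlinarith [hμ0 i]
  have hf2 : ∀ i, 0 < 1 + α * μ i := fun i => by nlinarith [hμ0 i]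
  have E1 : (star h ⬝ᵥ ((1 + D)⁻¹ *ᵥ h)).re
      = ∑ i, (1 + (1:ℝ) * μ i)⁻¹ * Complex.normSq (g i) := by
    have := hDecomp 1
    rw [Complex.ofReal_one, one_smul] at this
    rw [this, hInv _ hf1, hquad]
  have E2 : (star h ⬝ᵥ ((1 + (α : ℂ) • D)⁻¹ *ᵥ h)).re
      = ∑ i, (1 + α * μ i)⁻¹ * Complex.normSq (g i) := by
    rw [hDecomp α, hInv _ hf2, hquad]
  -- termwise comparison
  set c : ℝ := (1 + α * lam) / (1 + lam) with hcdef
  have hc0 : 0 < c := by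
    apply div_pos <;> nlinarith
  have hsumle : ∑ i, (1 + (1:ℝ) * μ i)⁻¹ * Complex.normSq (g i)
      ≤ c * ∑ i, (1 + α * μ i)⁻¹ * Complex.normSq (g i) := by
    rw [Finset.mul_sum]
    refine Finset.sum_le_sum fun i _ => ?_
    rw [← mul_assoc]
    apply mul_le_mul_of_nonneg_right _ (Complex.normSq_nonneg _)
    have hq : (0:ℝ) < 1 + α * μ i := hf2 i
    have hp : (0:ℝ) < 1 + 1 * μ i := hf1 i
    have hr : (0:ℝ) < 1 + lam := by nlinarith
    rw [hcdef, div_mul_eq_mul_div, le_div_iff₀ hr, inv_mul_eq_div, ← div_eq_mul_inv,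
      div_le_div_iff₀ hp hq]
    nlinarith [mul_nonneg (sub_nonneg.mpr (hμlam i)) (sub_nonneg.mpr hα.le)]
  -- positive definiteness facts
  have hBpos : (1 + D').PosDef := Matrix.PosDef.one.add_posSemidef hD'
  have hαD : ((α : ℂ) • D).PosSemidef := by
    have e : (α : ℂ) • D = ((α : ℂ) • D - D') + D' := by rw [sub_add_cancel]
    rw [e]
    exact (hDD'.add_posSemidef hD').posSemidef
  have hApos : (1 + (α : ℂ) • D).PosDef := Matrix.PosDef.one.add_posSemidef hαD
  have hABpos : ((1 + (α : ℂ) • D) - (1 + D')).PosDef := by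
    rw [add_sub_add_left_eq_sub]
    exact hDD'
  have hlt := stmt11_aux_inv_lt _ _ hApos hBpos hABpos h hh
  rw [E1]
  calc ∑ i, (1 + (1:ℝ) * μ i)⁻¹ * Complex.normSq (g i)
      ≤ c * ∑ i, (1 + α * μ i)⁻¹ * Complex.normSq (g i) := hsumle
    _ = c * (star h ⬝ᵥ ((1 + (α : ℂ) • D)⁻¹ *ᵥ h)).re := by rw [E2]
    _ < c * (star h ⬝ᵥ ((1 + D')⁻¹ *ᵥ h)).re := mul_lt_mul_of_pos_left hlt hc0
end

section
/- Let K ≥ 1, let I : ℝ_{++}^K → ℝ_{++}^K be monotone (β ≤ β̃ componentwise implies I(β) ≤ I(β̃) componentwise), and let λ : ℝ_{++}^K → ℝ_{>0} be a function such that for every α > 1, every β ∈ ℝ_{++}^K, and every k, I_k(α·β) / I_k(β) < (1 + α·λ(β)) / (1 + λ(β)). Then for all β, β̃ ∈ ℝ_{++}^K with β ≠ β̃, writing α = e^{μ(β, β̃)}, one has μ(I(β), I(β̃)) < max{ κ(α, λ(β)), κ(α, λ(β̃)) } · μ(β, β̃). -/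
/-- Eq. (55) of the paper: single-step contraction estimate for the dual fixed
point iteration, where `μ` is Thompson's part metric and
`κ(α, λ) = ln((1 + αλ)/(1 + λ)) / ln α`. -/
theorem stmt13 (K : ℕ) (hK : 1 ≤ K)
    (I : (Fin K → ℝ) → (Fin K → ℝ))
    (hpos : ∀ β : Fin K → ℝ, (∀ k, 0 < β k) → ∀ k, 0 < I β k)
    (hmono : ∀ β β' : Fin K → ℝ, (∀ k, 0 < β k) → (∀ k, 0 < β' k) →
      (∀ k, β k ≤ β' k) → ∀ k, I β k ≤ I β' k)
    (lam : (Fin K → ℝ) → ℝ)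
    (hlam : ∀ β : Fin K → ℝ, (∀ k, 0 < β k) → 0 < lam β)
    (hbound : ∀ α : ℝ, 1 < α → ∀ β : Fin K → ℝ, (∀ k, 0 < β k) → ∀ k,
      I (α • β) k / I β k < (1 + α * lam β) / (1 + lam β))
    (μ : (Fin K → ℝ) → (Fin K → ℝ) → ℝ)
    (hμ : ∀ x y : Fin K → ℝ, μ x y = ⨆ k : Fin K, |Real.log (x k / y k)|)
    (κ : ℝ → ℝ → ℝ)
    (hκ : ∀ α l : ℝ, κ α l = Real.log ((1 + α * l) / (1 + l)) / Real.log α)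
    (β β' : Fin K → ℝ) (hβ : ∀ k, 0 < β k) (hβ' : ∀ k, 0 < β' k) (hne : β ≠ β')
    (α : ℝ) (hα : α = Real.exp (μ β β')) :
    μ (I β) (I β') < max (κ α (lam β)) (κ α (lam β')) * μ β β' := by
  haveI : Nonempty (Fin K) := ⟨⟨0, hK⟩⟩
  set m := μ β β' with hm
  have hμββ' : m = ⨆ k : Fin K, |Real.log (β k / β' k)| := hμ β β'
  -- m > 0
  have hbdd : BddAbove (Set.range fun k : Fin K => |Real.log (β k / β' k)|) :=
    Set.Finite.bddAbove (Set.finite_range _)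
  obtain ⟨k0, hk0⟩ : ∃ k, β k ≠ β' k := by
    by_contra h
    push_neg at h
    exact hne (funext h)
  have hm0 : 0 < m := by
    rw [hμββ']
    have hne1 : β k0 / β' k0 ≠ 1 := by
      intro h
      exact hk0 (div_eq_one_iff_eq (ne_of_gt (hβ' k0)) |>.mp h)
    have hlogne : Real.log (β k0 / β' k0) ≠ 0 := by
      intro h
      rcases Real.log_eq_zero.mp h with h | h | h
      · exact absurd h (ne_of_gt (div_pos (hβ k0) (hβ' k0)))
      · exact hne1 h
      · linarith [div_pos (hβ k0) (hβ' k0)]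
    calc (0:ℝ) < |Real.log (β k0 / β' k0)| := abs_pos.mpr hlogne
      _ ≤ _ := le_ciSup hbdd k0
  have hα1 : 1 < α := by
    rw [hα]
    calc (1:ℝ) = Real.exp 0 := Real.exp_zero.symm
      _ < Real.exp m := Real.exp_lt_exp.mpr hm0
  have hα0 : 0 < α := lt_trans one_pos hα1
  have hlogα : Real.log α = m := by rw [hα, Real.log_exp]
  -- componentwise bounds
  have hle : ∀ k, β k ≤ α * β' k := by
    intro k
    have h1 : Real.log (β k / β' k) ≤ m := by
      rw [hμββ']
      exact le_trans (le_abs_self _) (le_ciSup hbdd k)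
    have h2 : β k / β' k ≤ α := by
      rw [← hlogα] at h1
      exact (Real.log_le_log_iff (div_pos (hβ k) (hβ' k)) hα0).mp h1
    calc β k = (β k / β' k) * β' k := (div_mul_cancel₀ _ (ne_of_gt (hβ' k))).symm
      _ ≤ α * β' k := by nlinarith [hβ' k]
  have hle' : ∀ k, β' k ≤ α * β k := by
    intro k
    have h1 : Real.log (β' k / β k) ≤ m := by
      rw [hμββ']
      have : Real.log (β' k / β k) = -Real.log (β k / β' k) := by
        rw [Real.log_div (ne_of_gt (hβ' k)) (ne_of_gt (hβ k)),
            Real.log_div (ne_of_gt (hβ k)) (ne_of_gt (hβ' k))]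
        ring
      rw [this]
      exact le_trans (neg_le_abs _) (le_ciSup hbdd k)
    have h2 : β' k / β k ≤ α := by
      rw [← hlogα] at h1
      exact (Real.log_le_log_iff (div_pos (hβ' k) (hβ k)) hα0).mp h1
    calc β' k = (β' k / β k) * β k := (div_mul_cancel₀ _ (ne_of_gt (hβ k))).symm
      _ ≤ α * β k := by nlinarith [hβ k]
  have hR : ∀ γ : Fin K → ℝ, (∀ k, 0 < γ k) → (0:ℝ) < 1 + α * lam γ := by
    intro γ hγ
    nlinarith [hlam γ hγ]
  -- key pointwise estimates: I β k / I β' k < R'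
  have key : ∀ (γ δ : Fin K → ℝ), (∀ k, 0 < γ k) → (∀ k, 0 < δ k) →
      (∀ k, γ k ≤ α * δ k) → ∀ k,
      I γ k / I δ k < (1 + α * lam δ) / (1 + lam δ) := by
    intro γ δ hγ hδ h k
    have hαδ : ∀ k, 0 < (α • δ) k := fun k => by
      simp only [Pi.smul_apply, smul_eq_mul]; exact mul_pos hα0 (hδ k)
    have h2 : I γ k ≤ I (α • δ) k := by
      apply hmono γ (α • δ) hγ hαδ
      intro k
      simpa [Pi.smul_apply, smul_eq_mul] using h k
    have h3 := hbound α hα1 δ hδ k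
    calc I γ k / I δ k ≤ I (α • δ) k / I δ k := by
          gcongr
          exact (hpos δ hδ k).le
      _ < _ := h3
  have key1 := key β β' hβ hβ' hle
  have key2 := key β' β hβ' hβ hle'
  set L := Real.log ((1 + α * lam β) / (1 + lam β)) with hL
  set L' := Real.log ((1 + α * lam β') / (1 + lam β')) with hL'
  have hIk : ∀ k, |Real.log (I β k / I β' k)| < max L L' := by
    intro k
    have hp : 0 < I β k / I β' k := div_pos (hpos β hβ k) (hpos β' hβ' k)
    have hp' : 0 < I β' k / I β k := div_pos (hpos β' hβ' k) (hpos β hβ k)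
    have h1 : Real.log (I β k / I β' k) < L' :=
      lt_of_lt_of_le (Real.log_lt_log hp (key1 k)) (le_refl _)
    have h2 : Real.log (I β' k / I β k) < L :=
      lt_of_lt_of_le (Real.log_lt_log hp' (key2 k)) (le_refl _)
    have hneg : Real.log (I β' k / I β k) = -Real.log (I β k / I β' k) := by
      rw [Real.log_div (ne_of_gt (hpos β' hβ' k)) (ne_of_gt (hpos β hβ k)),
          Real.log_div (ne_of_gt (hpos β hβ k)) (ne_of_gt (hpos β' hβ' k))]
      ring
    rw [hneg] at h2
    rw [abs_lt]
    constructor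
    · linarith [le_max_left L L']
    · exact lt_max_of_lt_right h1
  -- sup over finite index
  have hsup : μ (I β) (I β') < max L L' := by
    rw [hμ]
    obtain ⟨k1, hk1⟩ := Finite.exists_max (fun k : Fin K => |Real.log (I β k / I β' k)|)
    calc (⨆ k : Fin K, |Real.log (I β k / I β' k)|) ≤ |Real.log (I β k1 / I β' k1)| :=
          ciSup_le hk1
      _ < max L L' := hIk k1
  -- rewrite RHS
  have hmne : m ≠ 0 := ne_of_gt hm0
  have hκβ : κ α (lam β) * m = L := by
    rw [hκ, hlogα, div_mul_cancel₀ _ hmne]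
  have hκβ' : κ α (lam β') * m = L' := by
    rw [hκ, hlogα, div_mul_cancel₀ _ hmne]
  have : max (κ α (lam β)) (κ α (lam β')) * m = max L L' := by
    rw [← hκβ, ← hκβ', max_mul_of_nonneg _ _ (le_of_lt hm0)]
  rw [this]
  exact hsup
end

section
/- Let K ≥ 1, let G be a K×K real matrix with all entries nonnegative, let b ∈ ℝ^K have all entries strictly positive, and suppose p* ∈ ℝ^K has all entries nonnegative and satisfies p* = G p* + b. Then: (a) every entry of p* is strictly positive (indeed p* ≥ b componentwise); (b) every complex eigenvalue of G has modulus strictly less than 1; (c) p* is the unique solution of p = G p + b, and for every initial point p⁰ ∈ ℝ^K the iterates p^{(i+1)} = G p^{(i)} + b converge to p* as i → ∞. -/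
open Matrix

/-- if `G` is entrywise nonnegative, `b` entrywise positive, and `p* ≥ 0`
satisfies `p* = G p* + b`, then (a) `p* ≥ b > 0` entrywise; (b) every complex eigenvalue of
`G` has modulus `< 1`; (c) `p*` is the unique solution of `p = G p + b` and the iteration
`p ↦ G p + b` converges to `p*` from every initial point. -/
theorem stmt14 (K : ℕ) (hK : 1 ≤ K)
    (G : Matrix (Fin K) (Fin K) ℝ) (hG : ∀ i j, 0 ≤ G i j)
    (b : Fin K → ℝ) (hb : ∀ k, 0 < b k)
    (pstar : Fin K → ℝ) (hp0 : ∀ k, 0 ≤ pstar k)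
    (hfix : pstar = G *ᵥ pstar + b) :
    ((∀ k, b k ≤ pstar k) ∧ (∀ k, 0 < pstar k)) ∧
    (∀ (c : ℂ) (v : Fin K → ℂ), v ≠ 0 →
      (G.map (fun x : ℝ => (x : ℂ))) *ᵥ v = c • v → ‖c‖ < 1) ∧
    ((∀ p : Fin K → ℝ, p = G *ᵥ p + b → p = pstar) ∧
      (∀ p₀ : Fin K → ℝ,
        Filter.Tendsto (fun i => (fun p => G *ᵥ p + b)^[i] p₀)
          Filter.atTop (nhds pstar))) := by
  haveI : NeZero K := ⟨by omega⟩
  have hne : (Finset.univ : Finset (Fin K)).Nonempty := Finset.univ_nonempty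
  -- fixed point equation, entrywise
  have hGp : ∀ k, (∑ j, G k j * pstar j) + b k = pstar k := by
    intro k
    have := congrFun hfix k
    simpa [Matrix.mulVec, dotProduct] using this.symm
  have hsum_nonneg : ∀ k, 0 ≤ ∑ j, G k j * pstar j := fun k =>
    Finset.sum_nonneg fun j _ => mul_nonneg (hG k j) (hp0 j)
  have hbp : ∀ k, b k ≤ pstar k := by
    intro k; have := hGp k; nlinarith [hsum_nonneg k]
  have hpos : ∀ k, 0 < pstar k := fun k => lt_of_lt_of_le (hb k) (hbp k)
  -- contraction factor
  set ρ : ℝ := Finset.univ.sup' hne (fun k => (pstar k - b k) / pstar k) with hρdef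
  have hρ0 : 0 ≤ ρ := by
    obtain ⟨k⟩ := (inferInstance : Nonempty (Fin K))
    refine le_trans ?_ (Finset.le_sup' _ (Finset.mem_univ k))
    have := hGp k
    have h1 : 0 ≤ pstar k - b k := by nlinarith [hsum_nonneg k]
    exact div_nonneg h1 (hpos k).le
  have hρ1 : ρ < 1 := by
    rw [hρdef, Finset.sup'_lt_iff]
    intro k _
    rw [div_lt_one (hpos k)]
    linarith [hb k]
  have hρk : ∀ k, pstar k - b k ≤ ρ * pstar k := by
    intro k
    have := Finset.le_sup' (fun k => (pstar k - b k) / pstar k) (Finset.mem_univ k)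
    rw [div_le_iff₀ (hpos k)] at this
    exact this
  -- key contraction bound
  have key : ∀ (w : Fin K → ℝ) (C : ℝ), 0 ≤ C → (∀ j, w j ≤ C * pstar j) →
      ∀ k, (∑ j, G k j * w j) ≤ ρ * C * pstar k := by
    intro w C hC hwC k
    calc ∑ j, G k j * w j ≤ ∑ j, G k j * (C * pstar j) :=
          Finset.sum_le_sum fun j _ => mul_le_mul_of_nonneg_left (hwC j) (hG k j)
      _ = C * ∑ j, G k j * pstar j := by rw [Finset.mul_sum]; congr 1; ext j; ring
      _ = C * (pstar k - b k) := by rw [show (∑ j, G k j * pstar j) = pstar k - b k by linarith [hGp k]]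
      _ ≤ C * (ρ * pstar k) := mul_le_mul_of_nonneg_left (hρk k) hC
      _ = ρ * C * pstar k := by ring
  -- convergence of the iteration
  have hconv : ∀ p₀ : Fin K → ℝ,
      Filter.Tendsto (fun i => (fun p => G *ᵥ p + b)^[i] p₀)
        Filter.atTop (nhds pstar) := by
    intro p₀
    set f : (Fin K → ℝ) → (Fin K → ℝ) := fun p => G *ᵥ p + b with hfdef
    set C0 : ℝ := Finset.univ.sup' hne (fun k => |p₀ k - pstar k| / pstar k) with hC0def
    have hC00 : 0 ≤ C0 := by
      obtain ⟨k⟩ := (inferInstance : Nonempty (Fin K))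
      refine le_trans ?_ (Finset.le_sup' _ (Finset.mem_univ k))
      exact div_nonneg (abs_nonneg _) (hpos k).le
    have hbound : ∀ i k, |f^[i] p₀ k - pstar k| ≤ ρ ^ i * C0 * pstar k := by
      intro i
      induction i with
      | zero =>
        intro k
        simpa using (div_le_iff₀ (hpos k)).mp
          (Finset.le_sup' (fun k => |p₀ k - pstar k| / pstar k) (Finset.mem_univ k))
      | succ i ih =>
        intro k
        have hstep : f^[i+1] p₀ k - pstar k = ∑ j, G k j * (f^[i] p₀ j - pstar j) := by
          rw [Function.iterate_succ_apply']
          have : f (f^[i] p₀) k = (∑ j, G k j * f^[i] p₀ j) + b k := by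
            simp [hfdef, Matrix.mulVec, dotProduct]
          rw [this, ← hGp k]
          rw [show (∑ j, G k j * (f^[i] p₀ j - pstar j)) =
            (∑ j, G k j * f^[i] p₀ j) - ∑ j, G k j * pstar j by
              rw [← Finset.sum_sub_distrib]; exact Finset.sum_congr rfl fun j _ => by ring]
          ring
        rw [hstep]
        have habs : |∑ j, G k j * (f^[i] p₀ j - pstar j)| ≤
            ∑ j, G k j * |f^[i] p₀ j - pstar j| := by
          refine le_trans (Finset.abs_sum_le_sum_abs _ _) ?_
          apply Finset.sum_le_sum
          intro j _
          rw [abs_mul, abs_of_nonneg (hG k j)]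
        refine le_trans habs ?_
        have := key (fun j => |f^[i] p₀ j - pstar j|) (ρ ^ i * C0)
          (by positivity) (fun j => ih j) k
        calc ∑ j, G k j * |f^[i] p₀ j - pstar j| ≤ ρ * (ρ ^ i * C0) * pstar k := this
          _ = ρ ^ (i+1) * C0 * pstar k := by ring
    rw [tendsto_pi_nhds]
    intro k
    rw [← tendsto_sub_nhds_zero_iff]
    apply squeeze_zero_norm (fun i => hbound i k)
    have h1 : Filter.Tendsto (fun i : ℕ => ρ ^ i) Filter.atTop (nhds 0) :=
      tendsto_pow_atTop_nhds_zero_of_lt_one hρ0 hρ1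
    have := (h1.mul_const (C0 * pstar k))
    simpa [mul_assoc] using this
  refine ⟨⟨hbp, hpos⟩, ?_, ?_, hconv⟩
  · -- eigenvalues
    intro c v hv hEig
    have heig : ∀ k, ∑ j, (G k j : ℂ) * v j = c * v k := by
      intro k
      have := congrFun hEig k
      simpa [Matrix.mulVec, dotProduct, Matrix.map_apply] using this
    set C : ℝ := Finset.univ.sup' hne (fun j => ‖v j‖ / pstar j) with hCdef
    have hwC : ∀ j, ‖v j‖ ≤ C * pstar j := by
      intro j
      exact (div_le_iff₀ (hpos j)).mp
        (Finset.le_sup' (fun j => ‖v j‖ / pstar j) (Finset.mem_univ j))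
    have hCpos : 0 < C := by
      obtain ⟨j, hj⟩ := Function.ne_iff.mp hv
      refine lt_of_lt_of_le ?_ (Finset.le_sup' (fun j => ‖v j‖ / pstar j) (Finset.mem_univ j))
      have h2 : 0 < ‖v j‖ := norm_pos_iff.mpr hj
      exact div_pos h2 (hpos j)
    obtain ⟨k0, -, hk0⟩ := Finset.exists_mem_eq_sup' hne (fun j => ‖v j‖ / pstar j)
    have hvk0 : ‖v k0‖ = C * pstar k0 := by
      rw [hCdef, hk0]
      exact (div_mul_cancel₀ _ (hpos k0).ne').symm
    have hvk0pos : 0 < ‖v k0‖ := by rw [hvk0]; exact mul_pos hCpos (hpos k0)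
    have hnorm : ‖c‖ * ‖v k0‖ ≤ ∑ j, G k0 j * ‖v j‖ := by
      calc ‖c‖ * ‖v k0‖ = ‖c * v k0‖ := (norm_mul _ _).symm
        _ = ‖∑ j, (G k0 j : ℂ) * v j‖ := by rw [heig k0]
        _ ≤ ∑ j, ‖(G k0 j : ℂ) * v j‖ := norm_sum_le _ _
        _ = ∑ j, G k0 j * ‖v j‖ := by
            apply Finset.sum_congr rfl
            intro j _
            rw [norm_mul, Complex.norm_real, Real.norm_eq_abs, abs_of_nonneg (hG k0 j)]
    have hkey := key (fun j => ‖v j‖) C hCpos.le hwC k0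
    have : ‖c‖ * ‖v k0‖ ≤ ρ * ‖v k0‖ := by
      refine le_trans hnorm (le_trans hkey ?_)
      rw [hvk0]
      exact le_of_eq (by ring)
    have hle : ‖c‖ ≤ ρ := by
      have := (mul_le_mul_iff_of_pos_right hvk0pos).mp this
      exact this
    exact lt_of_le_of_lt hle hρ1
  · -- uniqueness
    intro p hp
    have hfp : (fun q => G *ᵥ q + b) p = p := hp.symm
    have hiter : ∀ i, (fun q => G *ᵥ q + b)^[i] p = p := by
      intro i
      induction i with
      | zero => rfl
      | succ i ih => rw [Function.iterate_succ_apply', ih]; exact hfp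
    have h1 : Filter.Tendsto (fun i => (fun q => G *ᵥ q + b)^[i] p) Filter.atTop (nhds p) := by
      simp only [hiter]; exact tendsto_const_nhds
    exact tendsto_nhds_unique h1 (hconv p)
end

section
/- Let M, K ≥ 1, h_1,…,h_K ∈ ℂ^M, γ̄_k > 0, σ_k > 0, and η_m > 1 for m ∈ {1,…,M}. Suppose V_1,…,V_K, Q are M×M Hermitian positive semidefinite matrices satisfying the primal constraints: a_k := (1/γ̄_k) h_k† V_k h_k − Σ_{j≠k} h_k† V_j h_k − h_k† Q h_k − σ_k² ≥ 0 for every k, and B_m := η_m · blockDiag(0, Q^{(m:M,m:M)}) − (Σ_k V_k^{(m,m)} + Q^{(m,m)}) E_m ⪰ 0 for every m. Suppose β_1,…,β_K ≥ 0 and Λ_1,…,Λ_M are M×M Hermitian positive semidefinite matrices satisfying the dual constraints: C_k − (β_k/γ̄_k) h_k h_k† ⪰ 0 for every k, where C_k = I_M + Σ_{j≠k} β_j h_j h_j† + Σ_m Λ_m^{(m,m)} E_m, and D ⪰ 0, where D = I_M + Σ_k β_k h_k h_k† + Σ_m Λ_m^{(m,m)} E_m − Σ_m η_m · blockDiag(0,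 Λ_m^{(m:M,m:M)}). Then Σ_k tr(V_k) + tr(Q) ≥ Σ_k β_k σ_k². -/
/-! Pair each primal constraint with its multiplier (`β_k` with `a_k`, `Λ_m` with `B_m`) and each
dual slack matrix with its primal variable (`C_k - (β_k/γ̄_k) h_k h_kᴴ` with `V_k`, `D` with `Q`).
The four sums of pairings add up exactly to the duality gap `Σ_k tr V_k + tr Q - Σ_k β_k σ_k²`;
the cancellation uses that `blockDiag(0, ·)` is self-adjoint for the trace pairing. Every
pairing is nonnegative, being either `β_k a_k` or the trace of a product of two positive
semidefinite matrices. Below, `a_k`, `B_m`, `C_k - (β_k/γ̄_k) h_k h_kᴴ` and `D` are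
`sinrSlack`, `compressionSlack`, `dualSlackV` and `dualSlackQ`. -/

open Matrix
open scoped ComplexOrder

/-- `blockDiag(0, Q^{(m:M,m:M)})`: the `M × M` matrix whose trailing principal block (rows and
columns with index `≥ m`) equals the corresponding block of `Q`, and which is zero elsewhere. -/
def trailingBlock {M : ℕ} (m : Fin M) (Q : Matrix (Fin M) (Fin M) ℂ) :
    Matrix (Fin M) (Fin M) ℂ :=
  Matrix.of fun i j => if m ≤ i ∧ m ≤ j then Q i j else 0

namespace Matrix

variable {n : Type*} [Fintype n]

theorem PosSemidef.trace_mul_nonneg {𝕜 : Type*} [RCLike 𝕜] {A B : Matrix n n 𝕜}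
    (hA : A.PosSemidef) (hB : B.PosSemidef) : 0 ≤ (A * B).trace := by
  classical
  open scoped MatrixOrder in
  obtain ⟨C, rfl⟩ := CStarAlgebra.nonneg_iff_eq_star_mul_self.mp hA.nonneg
  rw [star_eq_conjTranspose, Matrix.mul_assoc, trace_mul_comm]
  exact (hB.mul_mul_conjTranspose_same C).trace_nonneg

theorem trace_vecMulVec_star_mul {R : Type*} [CommSemiring R] [StarRing R] (x : n → R)
    (A : Matrix n n R) : (vecMulVec x (star x) * A).trace = star x ⬝ᵥ (A *ᵥ x) := by
  rw [vecMulVec_mul, trace_vecMulVec, dotProduct_comm, dotProduct_mulVec]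

end Matrix

theorem trace_trailingBlock_mul {M : ℕ} (m : Fin M) (A B : Matrix (Fin M) (Fin M) ℂ) :
    (trailingBlock m A * B).trace = (A * trailingBlock m B).trace := by
  simp only [trace, diag, mul_apply, trailingBlock, of_apply, ite_mul, mul_ite, zero_mul, mul_zero]
  refine Finset.sum_congr rfl fun i _ => Finset.sum_congr rfl fun j _ => ?_
  by_cases hi : m ≤ i <;> by_cases hj : m ≤ j <;> simp [hi, hj]

noncomputable section WeakDuality

variable {M K : ℕ} (h : Fin K → Fin M → ℂ) (γ σ : Fin K → ℝ) (η : Fin M → ℝ)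
  (V : Fin K → Matrix (Fin M) (Fin M) ℂ) (Q : Matrix (Fin M) (Fin M) ℂ)
  (β : Fin K → ℝ) (Λ : Fin M → Matrix (Fin M) (Fin M) ℂ)

def sinrSlack (k : Fin K) : ℂ :=
  ((1 / γ k : ℝ) : ℂ) * (star (h k) ⬝ᵥ (V k *ᵥ h k))
    - ∑ j ∈ Finset.univ.erase k, star (h k) ⬝ᵥ (V j *ᵥ h k)
    - star (h k) ⬝ᵥ (Q *ᵥ h k) - ((σ k ^ 2 : ℝ) : ℂ)

theorem re_sinrSlack (k : Fin K) :
    (sinrSlack h γ σ V Q k).re = (1 / γ k) * (star (h k) ⬝ᵥ (V k *ᵥ h k)).re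
      - ∑ j ∈ Finset.univ.erase k, (star (h k) ⬝ᵥ (V j *ᵥ h k)).re
      - (star (h k) ⬝ᵥ (Q *ᵥ h k)).re - σ k ^ 2 := by
  simp only [sinrSlack, Complex.sub_re, Complex.re_ofReal_mul, Complex.re_sum, Complex.ofReal_re]

def compressionSlack (m : Fin M) : Matrix (Fin M) (Fin M) ℂ :=
  (η m : ℂ) • trailingBlock m Q - ((∑ k, V k m m) + Q m m) • single m m 1

def dualSlackV (k : Fin K) : Matrix (Fin M) (Fin M) ℂ :=
  (1 + (∑ j ∈ Finset.univ.erase k, (β j : ℂ) • vecMulVec (h j) (star (h j)))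
      + ∑ m, Λ m m m • single m m 1)
    - ((β k / γ k : ℝ) : ℂ) • vecMulVec (h k) (star (h k))

def dualSlackQ : Matrix (Fin M) (Fin M) ℂ :=
  (1 + (∑ k, (β k : ℂ) • vecMulVec (h k) (star (h k)))
      + (∑ m, Λ m m m • single m m 1))
    - ∑ m, (η m : ℂ) • trailingBlock m (Λ m)

theorem sum_slack_pairings_eq_duality_gap :
    ∑ k, (β k : ℂ) * sinrSlack h γ σ V Q k + ∑ m, (Λ m * compressionSlack η V Q m).trace
      + ∑ k, (dualSlackV h γ β Λ k * V k).trace + (dualSlackQ h η β Λ * Q).trace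
      = ∑ k, (V k).trace + Q.trace - ((∑ k, β k * σ k ^ 2 : ℝ) : ℂ) := by
  simp only [sinrSlack, compressionSlack, dualSlackV, dualSlackQ, Matrix.mul_sub, Matrix.sub_mul,
    Matrix.add_mul, Matrix.sum_mul, Matrix.smul_mul, Matrix.mul_smul, trace_sub,
    trace_add, trace_sum, trace_smul, smul_eq_mul, trace_vecMulVec_star_mul, trace_single_mul,
    trace_mul_single, ← trace_trailingBlock_mul, Finset.sum_erase_eq_sub (Finset.mem_univ _),
    MulOpposite.op_one, one_smul, one_mul]
  have hcross : ∑ k, (β k : ℂ) * ∑ j, star (h k) ⬝ᵥ V j *ᵥ h k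
      = ∑ j, ∑ k, (β k : ℂ) * star (h k) ⬝ᵥ V j *ᵥ h k := by
    simp only [Finset.mul_sum]; exact Finset.sum_comm
  have hdiag : ∑ m, (∑ k, V k m m + Q m m) * Λ m m m
      = ∑ k, ∑ m, Λ m m m * V k m m + ∑ m, Λ m m m * Q m m := by
    simp only [add_mul, Finset.sum_mul, Finset.sum_add_distrib, mul_comm (Λ _ _ _)]
    rw [Finset.sum_comm]
  simp only [mul_sub, Finset.sum_sub_distrib, Finset.sum_add_distrib] at hcross ⊢
  have hscale : ∑ k, ((β k / γ k : ℝ) : ℂ) * star (h k) ⬝ᵥ V k *ᵥ h k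
      = ∑ k, (β k : ℂ) * (((1 / γ k : ℝ) : ℂ) * star (h k) ⬝ᵥ V k *ᵥ h k) :=
    Finset.sum_congr rfl fun k _ => by push_cast; ring
  push_cast at hscale ⊢
  linear_combination -hcross - hscale - hdiag

end WeakDuality

theorem stmt15_general (M K : ℕ)
    (h : Fin K → Fin M → ℂ)
    (γ : Fin K → ℝ)
    (σ : Fin K → ℝ)
    (η : Fin M → ℝ)
    (V : Fin K → Matrix (Fin M) (Fin M) ℂ) (hV : ∀ k, (V k).PosSemidef)
    (Q : Matrix (Fin M) (Fin M) ℂ) (hQ : Q.PosSemidef)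
    (ha : ∀ k : Fin K,
      0 ≤ (1 / γ k) * (star (h k) ⬝ᵥ (V k *ᵥ h k)).re
            - ∑ j ∈ Finset.univ.erase k, (star (h k) ⬝ᵥ (V j *ᵥ h k)).re
            - (star (h k) ⬝ᵥ (Q *ᵥ h k)).re - σ k ^ 2)
    (hB : ∀ m : Fin M,
      ((η m : ℂ) • trailingBlock m Q
        - ((∑ k, V k m m) + Q m m) • Matrix.single m m (1 : ℂ)).PosSemidef)
    (β : Fin K → ℝ) (hβ : ∀ k, 0 ≤ β k)
    (Λ : Fin M → Matrix (Fin M) (Fin M) ℂ) (hΛ : ∀ m, (Λ m).PosSemidef)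
    (hC : ∀ k : Fin K,
      ((1 + (∑ j ∈ Finset.univ.erase k, (β j : ℂ) • vecMulVec (h j) (star (h j)))
          + ∑ m, Λ m m m • Matrix.single m m (1 : ℂ))
        - ((β k / γ k : ℝ) : ℂ) • vecMulVec (h k) (star (h k))).PosSemidef)
    (hD : (1 + (∑ k, (β k : ℂ) • vecMulVec (h k) (star (h k)))
          + (∑ m, Λ m m m • Matrix.single m m (1 : ℂ))
          - ∑ m, (η m : ℂ) • trailingBlock m (Λ m)).PosSemidef) :
    ∑ k, β k * σ k ^ 2 ≤ (∑ k, (V k).trace).re + Q.trace.re := by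
  have hsinr : ∀ k, 0 ≤ ((β k : ℂ) * sinrSlack h γ σ V Q k).re := fun k => by
    rw [Complex.re_ofReal_mul, re_sinrSlack]
    exact mul_nonneg (hβ k) (ha k)
  have hpair : ∀ {A B : Matrix (Fin M) (Fin M) ℂ}, A.PosSemidef → B.PosSemidef →
      0 ≤ (A * B).trace.re := fun hA hB => (Complex.nonneg_iff.mp (hA.trace_mul_nonneg hB)).1
  have hgap := congrArg Complex.re (sum_slack_pairings_eq_duality_gap h γ σ η V Q β Λ)
  simp only [Complex.add_re, Complex.sub_re, Complex.re_sum, Complex.ofReal_re] at hgap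
  rw [Complex.re_sum, ← sub_nonneg, ← hgap]
  refine add_nonneg (add_nonneg (add_nonneg ?_ ?_) ?_) (hpair hD hQ)
  · exact Finset.sum_nonneg fun k _ => hsinr k
  · exact Finset.sum_nonneg fun m _ => hpair (hΛ m) (hB m)
  · exact Finset.sum_nonneg fun k _ => hpair (hC k) (hV k)

/-- weak duality between the semidefinite relaxation of the joint beamforming
and compression problem and its Lagrangian dual:
any primal feasible `(V, Q)` and dual feasible `(β, Λ)` satisfy
`Σ_k tr V_k + tr Q ≥ Σ_k β_k σ_k²`. -/
theorem stmt15 (M K : ℕ) (hM : 1 ≤ M) (hK : 1 ≤ K)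
    (h : Fin K → Fin M → ℂ)
    (γ : Fin K → ℝ) (hγ : ∀ k, 0 < γ k)
    (σ : Fin K → ℝ) (hσ : ∀ k, 0 < σ k)
    (η : Fin M → ℝ) (hη : ∀ m, 1 < η m)
    (V : Fin K → Matrix (Fin M) (Fin M) ℂ) (hV : ∀ k, (V k).PosSemidef)
    (Q : Matrix (Fin M) (Fin M) ℂ) (hQ : Q.PosSemidef)
    (ha : ∀ k : Fin K,
      0 ≤ (1 / γ k) * (star (h k) ⬝ᵥ (V k *ᵥ h k)).re
            - ∑ j ∈ Finset.univ.erase k, (star (h k) ⬝ᵥ (V j *ᵥ h k)).re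
            - (star (h k) ⬝ᵥ (Q *ᵥ h k)).re - σ k ^ 2)
    (hB : ∀ m : Fin M,
      ((η m : ℂ) • trailingBlock m Q
        - ((∑ k, V k m m) + Q m m) • Matrix.single m m (1 : ℂ)).PosSemidef)
    (β : Fin K → ℝ) (hβ : ∀ k, 0 ≤ β k)
    (Λ : Fin M → Matrix (Fin M) (Fin M) ℂ) (hΛ : ∀ m, (Λ m).PosSemidef)
    (hC : ∀ k : Fin K,
      ((1 + (∑ j ∈ Finset.univ.erase k, (β j : ℂ) • vecMulVec (h j) (star (h j)))
          + ∑ m, Λ m m m • Matrix.single m m (1 : ℂ))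
        - ((β k / γ k : ℝ) : ℂ) • vecMulVec (h k) (star (h k))).PosSemidef)
    (hD : (1 + (∑ k, (β k : ℂ) • vecMulVec (h k) (star (h k)))
          + (∑ m, Λ m m m • Matrix.single m m (1 : ℂ))
          - ∑ m, (η m : ℂ) • trailingBlock m (Λ m)).PosSemidef) :
    ∑ k, β k * σ k ^ 2 ≤ (∑ k, (V k).trace).re + Q.trace.re :=
  stmt15_general M K h γ σ η V hV Q hQ ha hB β hβ Λ hΛ hC hD
end

section
/- In the setting of the primal-dual pair for the semidefinite relaxation: with data h_k ∈ ℂ^M, γ̄_k > 0, σ_k > 0 (k = 1,…,K), η_m > 1 (m = 1,…,M), suppose V_1,…,V_K, Q are Hermitian positive semidefinite and feasible (a_k ≥ 0 for all k and B_m ⪰ 0 for all m), and β ≥ 0, Λ_1,…,Λ_M Hermitian positive semidefinite are dual feasible (C_k − (β_k/γ̄_k) h_k h_k† ⪰ 0 for all k and D ⪰ 0). If moreover the complementary slackness conditions hold: tr(V_k (C_k − (β_k/γ̄_k) h_k h_k†)) = 0 for all k, tr(Q D) = 0, β_k · a_k = 0 for all k, and tr(Λ_m B_m) = 0 for all m,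 then Σ_k tr(V_k) + tr(Q) = Σ_k β_k σ_k², and consequently (V_1,…,V_K, Q) minimizes Σ_k tr(V_k′) + tr(Q′) over all Hermitian positive semidefinite feasible tuples (V_1′,…,V_K′, Q′). -/
open Matrix
open scoped ComplexOrder

/-- The SINR slack `a_k` of the primal problem. -/
noncomputable def aSlack {M K : ℕ} (h : Fin K → Fin M → ℂ) (γ σ : Fin K → ℝ)
    (V : Fin K → Matrix (Fin M) (Fin M) ℂ) (Q : Matrix (Fin M) (Fin M) ℂ) (k : Fin K) : ℝ :=
  (1 / γ k) * (star (h k) ⬝ᵥ (V k *ᵥ h k)).re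
    - ∑ j ∈ Finset.univ.erase k, (star (h k) ⬝ᵥ (V j *ᵥ h k)).re
    - (star (h k) ⬝ᵥ (Q *ᵥ h k)).re - σ k ^ 2

/-- The fronthaul matrix `B_m` of the primal problem. -/
noncomputable def Bmat {M K : ℕ} (η : Fin M → ℝ)
    (V : Fin K → Matrix (Fin M) (Fin M) ℂ) (Q : Matrix (Fin M) (Fin M) ℂ) (m : Fin M) :
    Matrix (Fin M) (Fin M) ℂ :=
  (η m : ℂ) • trailingBlock m Q
    - ((∑ k, V k m m) + Q m m) • Matrix.single m m (1 : ℂ)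

/-- The dual matrix `C_k`. -/
noncomputable def Cmat {M K : ℕ} (h : Fin K → Fin M → ℂ) (β : Fin K → ℝ)
    (Λ : Fin M → Matrix (Fin M) (Fin M) ℂ) (k : Fin K) : Matrix (Fin M) (Fin M) ℂ :=
  1 + (∑ j ∈ Finset.univ.erase k, (β j : ℂ) • vecMulVec (h j) (star (h j)))
    + ∑ m, Λ m m m • Matrix.single m m (1 : ℂ)

/-- The dual matrix `D`. -/
noncomputable def Dmat {M K : ℕ} (h : Fin K → Fin M → ℂ) (η : Fin M → ℝ) (β : Fin K → ℝ)
    (Λ : Fin M → Matrix (Fin M) (Fin M) ℂ) : Matrix (Fin M) (Fin M) ℂ :=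
  1 + (∑ k, (β k : ℂ) • vecMulVec (h k) (star (h k)))
    + (∑ m, Λ m m m • Matrix.single m m (1 : ℂ))
    - ∑ m, (η m : ℂ) • trailingBlock m (Λ m)

/-- Primal feasibility of `(V, Q)` for the semidefinite relaxation. -/
def primalFeasible {M K : ℕ} (h : Fin K → Fin M → ℂ) (γ σ : Fin K → ℝ) (η : Fin M → ℝ)
    (V : Fin K → Matrix (Fin M) (Fin M) ℂ) (Q : Matrix (Fin M) (Fin M) ℂ) : Prop :=
  (∀ k, (V k).PosSemidef) ∧ Q.PosSemidef ∧
    (∀ k, 0 ≤ aSlack h γ σ V Q k) ∧ (∀ m, (Bmat η V Q m).PosSemidef)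

lemma trace_mul_vecMulVec {n : ℕ} (A : Matrix (Fin n) (Fin n) ℂ) (v : Fin n → ℂ) :
    (A * vecMulVec v (star v)).trace = star v ⬝ᵥ (A *ᵥ v) := by
  simp only [Matrix.trace, Matrix.diag, Matrix.mul_apply, Matrix.vecMulVec_apply,
    dotProduct, Matrix.mulVec, Pi.star_apply, Finset.mul_sum]
  apply Finset.sum_congr rfl
  intro i _
  apply Finset.sum_congr rfl
  intro j _
  ring

lemma trace_mul_stdBasis {n : ℕ} (A : Matrix (Fin n) (Fin n) ℂ) (m : Fin n) :
    (A * Matrix.single m m (1 : ℂ)).trace = A m m := by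
  simp only [Matrix.trace, Matrix.diag, Matrix.mul_apply, Matrix.single]
  simp [ite_and, Finset.sum_ite_eq]

lemma trace_mul_trailing {n : ℕ} (A B : Matrix (Fin n) (Fin n) ℂ) (m : Fin n) :
    (A * trailingBlock m B).trace = (B * trailingBlock m A).trace := by
  simp only [Matrix.trace, Matrix.diag, Matrix.mul_apply, trailingBlock, Matrix.of_apply]
  rw [Finset.sum_comm]
  apply Finset.sum_congr rfl; intro i _
  apply Finset.sum_congr rfl; intro j _
  by_cases hmi : m ≤ i <;> by_cases hmj : m ≤ j <;> simp [hmi, hmj, mul_comm]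

section expand
variable {M K : ℕ} (h : Fin K → Fin M → ℂ) (γ σ : Fin K → ℝ) (η : Fin M → ℝ)
  (β : Fin K → ℝ) (Λ : Fin M → Matrix (Fin M) (Fin M) ℂ)
  (V : Fin K → Matrix (Fin M) (Fin M) ℂ) (Q : Matrix (Fin M) (Fin M) ℂ)

lemma expandC (k : Fin K) :
    (V k * (Cmat h β Λ k - ((β k / γ k : ℝ) : ℂ) • vecMulVec (h k) (star (h k)))).trace
      = (V k).trace
        + ∑ j ∈ Finset.univ.erase k, (β j : ℂ) * (star (h j) ⬝ᵥ (V k *ᵥ h j))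
        + ∑ m, Λ m m m * (V k) m m
        - ((β k / γ k : ℝ) : ℂ) * (star (h k) ⬝ᵥ (V k *ᵥ h k)) := by
  simp only [Cmat, Matrix.mul_sub, Matrix.mul_add, Matrix.mul_one, Matrix.mul_smul,
    Matrix.trace_sub, Matrix.trace_add, Matrix.trace_smul, Matrix.mul_sum, Matrix.trace_sum,
    smul_eq_mul, trace_mul_vecMulVec, trace_mul_stdBasis]

lemma expandD :
    (Q * Dmat h η β Λ).trace
      = Q.trace + ∑ k, (β k : ℂ) * (star (h k) ⬝ᵥ (Q *ᵥ h k))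
        + ∑ m, Λ m m m * Q m m
        - ∑ m, (η m : ℂ) * (Q * trailingBlock m (Λ m)).trace := by
  simp only [Dmat, Matrix.mul_sub, Matrix.mul_add, Matrix.mul_one, Matrix.mul_smul,
    Matrix.trace_sub, Matrix.trace_add, Matrix.trace_smul, Matrix.mul_sum, Matrix.trace_sum,
    smul_eq_mul, trace_mul_vecMulVec, trace_mul_stdBasis]

lemma expandB (m : Fin M) :
    (Λ m * Bmat η V Q m).trace
      = (η m : ℂ) * (Q * trailingBlock m (Λ m)).trace
        - ((∑ k, V k m m) + Q m m) * Λ m m m := by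
  simp only [Bmat, Matrix.mul_sub, Matrix.mul_smul, Matrix.trace_sub, Matrix.trace_smul,
    smul_eq_mul, trace_mul_stdBasis, trace_mul_trailing (Λ m) Q m]

end expand

section master
variable {M K : ℕ} (h : Fin K → Fin M → ℂ) (γ σ : Fin K → ℝ) (η : Fin M → ℝ)
  (β : Fin K → ℝ) (Λ : Fin M → Matrix (Fin M) (Fin M) ℂ)
  (V : Fin K → Matrix (Fin M) (Fin M) ℂ) (Q : Matrix (Fin M) (Fin M) ℂ)

lemma masterC :
    (∑ k, (V k * (Cmat h β Λ k
        - ((β k / γ k : ℝ) : ℂ) • vecMulVec (h k) (star (h k)))).trace)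
      + (Q * Dmat h η β Λ).trace + ∑ m, (Λ m * Bmat η V Q m).trace
    = (∑ k, (V k).trace) + Q.trace
      - ∑ k, (((β k / γ k : ℝ) : ℂ) * (star (h k) ⬝ᵥ (V k *ᵥ h k))
          - (β k : ℂ) * ∑ j ∈ Finset.univ.erase k, (star (h k) ⬝ᵥ (V j *ᵥ h k))
          - (β k : ℂ) * (star (h k) ⬝ᵥ (Q *ᵥ h k))) := by
  have hC' : (∑ k, (V k * (Cmat h β Λ k
        - ((β k / γ k : ℝ) : ℂ) • vecMulVec (h k) (star (h k)))).trace)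
      = (∑ k, (V k).trace)
        + (∑ k, ∑ j ∈ Finset.univ.erase k, (β j : ℂ) * (star (h j) ⬝ᵥ (V k *ᵥ h j)))
        + (∑ k, ∑ m, Λ m m m * (V k) m m)
        - ∑ k, ((β k / γ k : ℝ) : ℂ) * (star (h k) ⬝ᵥ (V k *ᵥ h k)) := by
    rw [Finset.sum_congr rfl (fun k _ => expandC h γ β Λ V k)]
    simp only [Finset.sum_add_distrib, Finset.sum_sub_distrib]
  have hB' : (∑ m, (Λ m * Bmat η V Q m).trace)
      = (∑ m, (η m : ℂ) * (Q * trailingBlock m (Λ m)).trace)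
        - ∑ m, ((∑ k, V k m m) + Q m m) * Λ m m m := by
    rw [Finset.sum_congr rfl (fun m _ => expandB η Λ V Q m)]
    simp only [Finset.sum_sub_distrib]
  have hswap : (∑ k, ∑ j ∈ Finset.univ.erase k, (β j : ℂ) * (star (h j) ⬝ᵥ (V k *ᵥ h j)))
      = ∑ k, (β k : ℂ) * ∑ j ∈ Finset.univ.erase k, (star (h k) ⬝ᵥ (V j *ᵥ h k)) := by
    have e1 : ∀ k : Fin K, ∑ j ∈ Finset.univ.erase k, (β j : ℂ) * (star (h j) ⬝ᵥ (V k *ᵥ h j))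
        = (∑ j, (β j : ℂ) * (star (h j) ⬝ᵥ (V k *ᵥ h j)))
          - (β k : ℂ) * (star (h k) ⬝ᵥ (V k *ᵥ h k)) := fun k =>
      Finset.sum_erase_eq_sub (Finset.mem_univ k)
    have e2 : ∀ k : Fin K, ∑ j ∈ Finset.univ.erase k, (star (h k) ⬝ᵥ (V j *ᵥ h k))
        = (∑ j, (star (h k) ⬝ᵥ (V j *ᵥ h k))) - (star (h k) ⬝ᵥ (V k *ᵥ h k)) := fun k =>
      Finset.sum_erase_eq_sub (Finset.mem_univ k)
    simp only [e1, e2, mul_sub, Finset.sum_sub_distrib, Finset.mul_sum]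
    rw [Finset.sum_comm]
  have hS : (∑ k, ∑ m, Λ m m m * (V k) m m) + (∑ m, Λ m m m * Q m m)
      = ∑ m, ((∑ k, V k m m) + Q m m) * Λ m m m := by
    simp only [add_mul, Finset.sum_add_distrib, Finset.sum_mul]
    rw [Finset.sum_comm]
    congr 1
    · apply Finset.sum_congr rfl; intro m _
      apply Finset.sum_congr rfl; intro k _; ring
    · apply Finset.sum_congr rfl; intro m _; ring
  rw [hC', expandD, hB', hswap, Finset.sum_sub_distrib, Finset.sum_sub_distrib, ← hS]
  ring

end master

lemma masterR {M K : ℕ} (h : Fin K → Fin M → ℂ) (γ σ : Fin K → ℝ) (η : Fin M → ℝ)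
    (β : Fin K → ℝ) (Λ : Fin M → Matrix (Fin M) (Fin M) ℂ)
    (V : Fin K → Matrix (Fin M) (Fin M) ℂ) (Q : Matrix (Fin M) (Fin M) ℂ) :
    (∑ k, (V k).trace).re + Q.trace.re
      = (∑ k, (V k * (Cmat h β Λ k
          - ((β k / γ k : ℝ) : ℂ) • vecMulVec (h k) (star (h k)))).trace).re
        + ((Q * Dmat h η β Λ).trace).re
        + (∑ m, (Λ m * Bmat η V Q m).trace).re
        + ∑ k, β k * (aSlack h γ σ V Q k + σ k ^ 2) := by
  have hre := congrArg Complex.re (masterC h γ η β Λ V Q)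
  simp only [Complex.add_re, Complex.sub_re, Complex.re_sum, Complex.re_ofReal_mul] at hre
  have e : ∀ k : Fin K, (β k / γ k) * (star (h k) ⬝ᵥ (V k *ᵥ h k)).re
      - β k * (∑ j ∈ Finset.univ.erase k, (star (h k) ⬝ᵥ (V j *ᵥ h k)).re)
      - β k * (star (h k) ⬝ᵥ (Q *ᵥ h k)).re
      = β k * (aSlack h γ σ V Q k + σ k ^ 2) := by
    intro k
    unfold aSlack
    ring
  simp only [e] at hre
  simp only [Complex.re_sum]
  linarith [hre]

lemma psd_trace_nonneg {n : ℕ} {A : Matrix (Fin n) (Fin n) ℂ} (hA : A.PosSemidef) :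
    0 ≤ A.trace := by
  rw [Matrix.trace]
  apply Finset.sum_nonneg
  intro i _
  exact hA.diag_nonneg

open scoped MatrixOrder in
lemma psd_trace_mul_nonneg {n : ℕ} {A B : Matrix (Fin n) (Fin n) ℂ}
    (hA : A.PosSemidef) (hB : B.PosSemidef) : 0 ≤ (A * B).trace := by
  have h1 : CFC.sqrt A * CFC.sqrt A = A := CFC.sqrt_mul_sqrt_self A hA.nonneg
  have h2 : (A * B).trace = (CFC.sqrt A * B * CFC.sqrt A).trace := by
    conv_lhs => rw [← h1]
    rw [Matrix.mul_assoc, Matrix.trace_mul_comm]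
  rw [h2]
  have hH : (CFC.sqrt A).conjTranspose = CFC.sqrt A := (CFC.sqrt_nonneg A).posSemidef.1
  have h3 : ((CFC.sqrt A)ᴴ * B * CFC.sqrt A).PosSemidef := hB.conjTranspose_mul_mul_same _
  rw [hH] at h3
  exact psd_trace_nonneg h3

lemma psd_trace_mul_re_nonneg {n : ℕ} {A B : Matrix (Fin n) (Fin n) ℂ}
    (hA : A.PosSemidef) (hB : B.PosSemidef) : 0 ≤ ((A * B).trace).re := by
  have := (Complex.le_def.mp (psd_trace_mul_nonneg hA hB)).1
  simpa using this

/-- essence of the paper's Theorem 3: primal and dual feasibility together with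
complementary slackness imply that the primal objective equals the dual objective, and hence
that `(V, Q)` is a global minimizer of the semidefinite relaxation. -/
theorem stmt16 (M K : ℕ) (hM : 1 ≤ M) (hK : 1 ≤ K)
    (h : Fin K → Fin M → ℂ)
    (γ : Fin K → ℝ) (hγ : ∀ k, 0 < γ k)
    (σ : Fin K → ℝ) (hσ : ∀ k, 0 < σ k)
    (η : Fin M → ℝ) (hη : ∀ m, 1 < η m)
    (V : Fin K → Matrix (Fin M) (Fin M) ℂ) (Q : Matrix (Fin M) (Fin M) ℂ)
    (hfeas : primalFeasible h γ σ η V Q)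
    (β : Fin K → ℝ) (hβ : ∀ k, 0 ≤ β k)
    (Λ : Fin M → Matrix (Fin M) (Fin M) ℂ) (hΛ : ∀ m, (Λ m).PosSemidef)
    (hC : ∀ k, (Cmat h β Λ k
      - ((β k / γ k : ℝ) : ℂ) • vecMulVec (h k) (star (h k))).PosSemidef)
    (hD : (Dmat h η β Λ).PosSemidef)
    (hslackV : ∀ k, (V k * (Cmat h β Λ k
      - ((β k / γ k : ℝ) : ℂ) • vecMulVec (h k) (star (h k)))).trace = 0)
    (hslackQ : (Q * Dmat h η β Λ).trace = 0)
    (hslacka : ∀ k, β k * aSlack h γ σ V Q k = 0)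
    (hslackB : ∀ m, (Λ m * Bmat η V Q m).trace = 0) :
    ((∑ k, (V k).trace).re + Q.trace.re = ∑ k, β k * σ k ^ 2) ∧
    (∀ (V' : Fin K → Matrix (Fin M) (Fin M) ℂ) (Q' : Matrix (Fin M) (Fin M) ℂ),
      primalFeasible h γ σ η V' Q' →
        (∑ k, (V k).trace).re + Q.trace.re ≤ (∑ k, (V' k).trace).re + Q'.trace.re) := by
  obtain ⟨hVpsd, hQpsd, ha, hB⟩ := hfeas
  have hsum : ∀ k : Fin K, β k * (aSlack h γ σ V Q k + σ k ^ 2) = β k * σ k ^ 2 := by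
    intro k
    have h1 : β k * (aSlack h γ σ V Q k + σ k ^ 2)
        = β k * aSlack h γ σ V Q k + β k * σ k ^ 2 := by ring
    rw [h1, hslacka k, zero_add]
  have heq : (∑ k, (V k).trace).re + Q.trace.re = ∑ k, β k * σ k ^ 2 := by
    have hm := masterR h γ σ η β Λ V Q
    simp only [hslackV, hslackQ, hslackB, Finset.sum_const_zero, Complex.zero_re,
      hsum, zero_add, add_zero] at hm
    exact hm
  refine ⟨heq, ?_⟩
  intro V' Q' hfeas'
  obtain ⟨hV', hQ', ha', hB'⟩ := hfeas'
  have hm := masterR h γ σ η β Λ V' Q'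
  have t1 : 0 ≤ (∑ k, (V' k * (Cmat h β Λ k
      - ((β k / γ k : ℝ) : ℂ) • vecMulVec (h k) (star (h k)))).trace).re := by
    rw [Complex.re_sum]
    exact Finset.sum_nonneg fun k _ => psd_trace_mul_re_nonneg (hV' k) (hC k)
  have t2 : 0 ≤ ((Q' * Dmat h η β Λ).trace).re := psd_trace_mul_re_nonneg hQ' hD
  have t3 : 0 ≤ (∑ m, (Λ m * Bmat η V' Q' m).trace).re := by
    rw [Complex.re_sum]
    exact Finset.sum_nonneg fun m _ => psd_trace_mul_re_nonneg (hΛ m) (hB' m)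
  have t4 : (∑ k, β k * σ k ^ 2) ≤ ∑ k, β k * (aSlack h γ σ V' Q' k + σ k ^ 2) := by
    apply Finset.sum_le_sum
    intro k _
    have hnn := mul_nonneg (hβ k) (ha' k)
    nlinarith
  rw [heq]
  linarith
end

section
/- With data h_k ∈ ℂ^M nonzero, γ̄_k > 0, σ_k > 0 (k = 1,…,K), and η_m > 1 (m = 1,…,M): suppose β ∈ ℝ^K with β ≥ 0 and Hermitian positive semidefinite Λ_1,…,Λ_M are dual feasible, i.e., C_k(β) − (β_k/γ̄_k) h_k h_k† ⪰ 0 for all k and D(β) ⪰ 0, and suppose β_{k₀} = 0 for some index k₀. Define β̃ by β̃_{k₀} = γ̄_{k₀} / (h_{k₀}† C_{k₀}(β)^{-1} h_{k₀}) and β̃_k = β_k for k ≠ k₀. Then β̃_{k₀} > 0, the pair (β̃, Λ_1,…,Λ_M) is again dual feasible, and Σ_k β̃_k σ_k² > Σ_k β_k σ_k². In particular, at any optimal solution of the dual problem all multipliers β_k are strictly positive. -/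
open Matrix
open scoped ComplexOrder

/-- Dual feasibility of `(β, Λ)`. -/
def dualFeasible {M K : ℕ} (h : Fin K → Fin M → ℂ) (γ : Fin K → ℝ) (η : Fin M → ℝ)
    (β : Fin K → ℝ) (Λ : Fin M → Matrix (Fin M) (Fin M) ℂ) : Prop :=
  (∀ k, 0 ≤ β k) ∧ (∀ m, (Λ m).PosSemidef) ∧
    (∀ k, (Cmat h β Λ k
      - ((β k / γ k : ℝ) : ℂ) • vecMulVec (h k) (star (h k))).PosSemidef) ∧
    (Dmat h η β Λ).PosSemidef

section Helpers

variable {M K : ℕ}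

lemma mulVec_outer (v x : Fin M → ℂ) :
    vecMulVec v (star v) *ᵥ x = (star v ⬝ᵥ x) • v := by
  ext i
  simp only [Matrix.mulVec, dotProduct, vecMulVec_apply, Pi.smul_apply, smul_eq_mul,
    Finset.sum_mul, Pi.star_apply]
  exact Finset.sum_congr rfl fun j _ => by ring

lemma quad_outer (v x : Fin M → ℂ) :
    star x ⬝ᵥ (vecMulVec v (star v) *ᵥ x) = star (star v ⬝ᵥ x) * (star v ⬝ᵥ x) := by
  rw [mulVec_outer, dotProduct_smul, smul_eq_mul, star_dotProduct, star_star, mul_comm]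

lemma outer_psd (v : Fin M → ℂ) : (vecMulVec v (star v)).PosSemidef := by
  refine Matrix.PosSemidef.of_dotProduct_mulVec_nonneg ?_ fun x => ?_
  · ext i j
    simp [conjTranspose_apply, vecMulVec_apply, mul_comm]
  · rw [quad_outer]
    exact star_mul_self_nonneg _

lemma smul_psd {c : ℝ} (hc : 0 ≤ c) {A : Matrix (Fin M) (Fin M) ℂ} (hA : A.PosSemidef) :
    ((c : ℂ) • A).PosSemidef := by
  refine Matrix.PosSemidef.of_dotProduct_mulVec_nonneg ?_ fun x => ?_
  · show ((c : ℂ) • A)ᴴ = _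
    rw [conjTranspose_smul, hA.1.eq]
    simp [Complex.star_def, Complex.conj_ofReal]
  · rw [smul_mulVec, dotProduct_smul, smul_eq_mul]
    exact mul_nonneg (by exact_mod_cast hc) (hA.dotProduct_mulVec_nonneg x)

lemma diag_nonneg {A : Matrix (Fin M) (Fin M) ℂ} (hA : A.PosSemidef) (m : Fin M) :
    0 ≤ A m m := by
  have h0 := hA.dotProduct_mulVec_nonneg (Pi.single m 1)
  simpa [dotProduct, Pi.single_apply, apply_ite, Finset.sum_ite_eq] using h0

lemma std_psd {d : ℂ} (hd : 0 ≤ d) (m : Fin M) :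
    (d • Matrix.single m m (1 : ℂ)).PosSemidef := by
  have : d • Matrix.single m m (1 : ℂ) = Matrix.diagonal (Pi.single m d) := by
    ext i j
    simp only [Matrix.smul_apply, Matrix.single, Matrix.of_apply,
      Matrix.diagonal_apply, Pi.single_apply, smul_eq_mul]
    by_cases h1 : i = j
    · subst h1
      by_cases h2 : m = i
      · subst h2; simp
      · have h2' : ¬ i = m := fun hh => h2 hh.symm
        simp [h2, h2']
    · have hiff : ¬ (m = i ∧ m = j) := by rintro ⟨rfl, rfl⟩; exact h1 rfl
      simp [hiff, h1]
  rw [this]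
  refine Matrix.PosSemidef.diagonal fun i => ?_
  rcases eq_or_ne i m with rfl | hi
  · simpa using hd
  · simp [Pi.single_apply, hi]

lemma sum_psd {ι : Type*} (s : Finset ι) (f : ι → Matrix (Fin M) (Fin M) ℂ)
    (hf : ∀ i ∈ s, (f i).PosSemidef) : (∑ i ∈ s, f i).PosSemidef :=
  Finset.sum_induction f _ (fun _ _ ha hb => ha.add hb) Matrix.PosSemidef.zero hf

lemma Cmat_posDef (h : Fin K → Fin M → ℂ) {β : Fin K → ℝ}
    {Λ : Fin M → Matrix (Fin M) (Fin M) ℂ} (hβ : ∀ k, 0 ≤ β k)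
    (hΛ : ∀ m, (Λ m).PosSemidef) (k : Fin K) : (Cmat h β Λ k).PosDef := by
  unfold Cmat
  refine (Matrix.PosDef.one.add_posSemidef ?_).add_posSemidef ?_
  · exact sum_psd _ _ fun j _ => smul_psd (hβ j) (outer_psd _)
  · exact sum_psd _ _ fun m _ => std_psd (diag_nonneg (hΛ m) m) m

/-- Cauchy–Schwarz for a positive semidefinite matrix. -/
lemma cs {A : Matrix (Fin M) (Fin M) ℂ} (hA : A.PosSemidef) (x y : Fin M → ℂ) :
    ‖star x ⬝ᵥ (A *ᵥ y)‖ ^ 2 ≤ (star x ⬝ᵥ (A *ᵥ x)).re * (star y ⬝ᵥ (A *ᵥ y)).re := by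
  obtain ⟨S, hS⟩ := by
    open scoped MatrixOrder in exact CStarAlgebra.nonneg_iff_eq_star_mul_self.mp hA.nonneg
  have hSS : Sᴴ * S = A := hS.symm
  have key : ∀ u w : Fin M → ℂ,
      star u ⬝ᵥ (A *ᵥ w) = star (S *ᵥ u) ⬝ᵥ (S *ᵥ w) := by
    intro u w
    rw [star_mulVec, ← dotProduct_mulVec, mulVec_mulVec, hSS]
  set a : EuclideanSpace ℂ (Fin M) := WithLp.toLp 2 (S *ᵥ x) with ha
  set b : EuclideanSpace ℂ (Fin M) := WithLp.toLp 2 (S *ᵥ y) with hb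
  have h1 : star x ⬝ᵥ (A *ᵥ y) = (inner ℂ a b : ℂ) := by
    rw [key, ha, hb, EuclideanSpace.inner_toLp_toLp, dotProduct_comm]
  have h2 : (star x ⬝ᵥ (A *ᵥ x)).re = ‖a‖ ^ 2 := by
    rw [key, ha]
    rw [show star (S *ᵥ x) ⬝ᵥ (S *ᵥ x) = (inner ℂ a a : ℂ) from
      by rw [ha, EuclideanSpace.inner_toLp_toLp, dotProduct_comm]]
    rw [← RCLike.re_to_complex]
    exact inner_self_eq_norm_sq a
  have h3 : (star y ⬝ᵥ (A *ᵥ y)).re = ‖b‖ ^ 2 := by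
    rw [key, hb]
    rw [show star (S *ᵥ y) ⬝ᵥ (S *ᵥ y) = (inner ℂ b b : ℂ) from
      by rw [hb, EuclideanSpace.inner_toLp_toLp, dotProduct_comm]]
    rw [← RCLike.re_to_complex]
    exact inner_self_eq_norm_sq b
  rw [h1, h2, h3, ← mul_pow]
  exact pow_le_pow_left₀ (norm_nonneg _) (norm_inner_le_norm a b) 2

/-- The key matrix inequality: `C − hh†/(h†C⁻¹h) ⪰ 0` for positive definite `C`. -/
lemma key_psd {C : Matrix (Fin M) (Fin M) ℂ} (hC : C.PosDef) (v : Fin M → ℂ) (hv : v ≠ 0) :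
    0 < (star v ⬝ᵥ (C⁻¹ *ᵥ v)).re ∧
    (C - ((((star v ⬝ᵥ (C⁻¹ *ᵥ v)).re)⁻¹ : ℝ) : ℂ) • vecMulVec v (star v)).PosSemidef := by
  set c : ℝ := (star v ⬝ᵥ (C⁻¹ *ᵥ v)).re with hc
  have hcpos : 0 < c := hC.inv.re_dotProduct_pos hv
  refine ⟨hcpos, Matrix.PosSemidef.of_dotProduct_mulVec_nonneg (hC.1.sub (smul_psd (inv_nonneg.mpr hcpos.le) (outer_psd v)).1) fun x => ?_⟩
  have hCinv : C * C⁻¹ = 1 := mul_nonsing_inv C (isUnit_iff_ne_zero.mpr hC.det_pos.ne')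
  have hCy : C *ᵥ (C⁻¹ *ᵥ v) = v := by rw [mulVec_mulVec, hCinv, one_mulVec]
  have hyy : star (C⁻¹ *ᵥ v) ⬝ᵥ (C *ᵥ (C⁻¹ *ᵥ v)) = star v ⬝ᵥ (C⁻¹ *ᵥ v) := by
    rw [hCy, star_mulVec, hC.1.inv.eq, ← dotProduct_mulVec]
  have hcs := cs hC.posSemidef x (C⁻¹ *ᵥ v)
  rw [hyy, hCy] at hcs
  -- the quadratic form of C at x is real
  have hq : star x ⬝ᵥ (C *ᵥ x) = ((star x ⬝ᵥ (C *ᵥ x)).re : ℂ) := by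
    have h0 := Complex.nonneg_iff.mp (hC.posSemidef.dotProduct_mulVec_nonneg x)
    exact Complex.ext rfl (by simp [h0.2])
  set q : ℝ := (star x ⬝ᵥ (C *ᵥ x)).re with hqdef
  -- the outer-product quadratic form
  have houter : star x ⬝ᵥ ((((c⁻¹ : ℝ) : ℂ) • vecMulVec v (star v)) *ᵥ x)
      = ((c⁻¹ * ‖star v ⬝ᵥ x‖ ^ 2 : ℝ) : ℂ) := by
    rw [smul_mulVec, dotProduct_smul, smul_eq_mul, quad_outer]
    rw [show star (star v ⬝ᵥ x) * (star v ⬝ᵥ x) = ((‖star v ⬝ᵥ x‖ ^ 2 : ℝ) : ℂ) from by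
      rw [Complex.star_def, Complex.conj_mul']; push_cast; ring]
    push_cast
    ring
  have hnorm : ‖star x ⬝ᵥ v‖ = ‖star v ⬝ᵥ x‖ := by
    rw [star_dotProduct]; exact norm_star _
  rw [hnorm] at hcs
  rw [sub_mulVec, dotProduct_sub, houter, hq, ← Complex.ofReal_sub]
  rw [show ((0 : ℂ) = ((0 : ℝ) : ℂ)) from rfl, Complex.real_le_real, sub_nonneg]
  calc c⁻¹ * ‖star v ⬝ᵥ x‖ ^ 2 ≤ c⁻¹ * (q * c) :=
        mul_le_mul_of_nonneg_left hcs (inv_nonneg.mpr hcpos.le)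
    _ = q := by field_simp

lemma sum_update_smul {ι : Type*} [DecidableEq ι] {s : Finset ι} {k₀ : ι}
    (hk : k₀ ∈ s) (β : ι → ℝ) (t : ℝ) (X : ι → Matrix (Fin M) (Fin M) ℂ) :
    ∑ j ∈ s, ((Function.update β k₀ t j : ℝ) : ℂ) • X j
      = (∑ j ∈ s, ((β j : ℝ) : ℂ) • X j) + ((t - β k₀ : ℝ) : ℂ) • X k₀ := by
  have hterm : ∀ j ∈ s, ((Function.update β k₀ t j : ℝ) : ℂ) • X j
      = ((β j : ℝ) : ℂ) • X j + (if j = k₀ then ((t - β k₀ : ℝ) : ℂ) • X k₀ else 0) := by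
    intro j _
    rcases eq_or_ne j k₀ with rfl | hj
    · rw [Function.update_self, if_pos rfl,
        show ((t - β j : ℝ) : ℂ) = (t : ℂ) - (β j : ℂ) from by push_cast; ring, sub_smul]
      abel
    · rw [Function.update_of_ne hj, if_neg hj, add_zero]
  rw [Finset.sum_congr rfl hterm, Finset.sum_add_distrib, Finset.sum_ite_eq' s k₀, if_pos hk]

lemma sum_update_smul_not_mem {ι : Type*} [DecidableEq ι] {s : Finset ι} {k₀ : ι}
    (hk : k₀ ∉ s) (β : ι → ℝ) (t : ℝ) (X : ι → Matrix (Fin M) (Fin M) ℂ) :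
    ∑ j ∈ s, ((Function.update β k₀ t j : ℝ) : ℂ) • X j
      = ∑ j ∈ s, ((β j : ℝ) : ℂ) • X j :=
  Finset.sum_congr rfl fun j hj => by
    rw [Function.update_of_ne (by rintro rfl; exact hk hj)]

/-- The main step: raising a zero multiplier keeps feasibility & increases the objective. -/
lemma key_step (h : Fin K → Fin M → ℂ) (hh : ∀ k, h k ≠ 0)
    (γ : Fin K → ℝ) (hγ : ∀ k, 0 < γ k)
    (σ : Fin K → ℝ) (hσ : ∀ k, 0 < σ k)
    (η : Fin M → ℝ) (β : Fin K → ℝ) (Λ : Fin M → Matrix (Fin M) (Fin M) ℂ)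
    (hfeas : dualFeasible h γ η β Λ) (k₀ : Fin K) (hk₀ : β k₀ = 0)
    (βt : Fin K → ℝ)
    (hβt : βt = Function.update β k₀
      (γ k₀ / (star (h k₀) ⬝ᵥ ((Cmat h β Λ k₀)⁻¹ *ᵥ h k₀)).re)) :
    0 < βt k₀ ∧ dualFeasible h γ η βt Λ ∧
      ∑ k, β k * σ k ^ 2 < ∑ k, βt k * σ k ^ 2 := by
  obtain ⟨hβ, hΛ, hCk, hD⟩ := hfeas
  have hCpd := Cmat_posDef h hβ hΛ k₀
  obtain ⟨hcpos, hpsd⟩ := key_psd hCpd (h k₀) (hh k₀)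
  set c : ℝ := (star (h k₀) ⬝ᵥ ((Cmat h β Λ k₀)⁻¹ *ᵥ h k₀)).re with hc
  set t : ℝ := γ k₀ / c with htdef
  have ht : 0 < t := div_pos (hγ k₀) hcpos
  have hβtk₀ : βt k₀ = t := by rw [hβt, Function.update_self]
  have hβtne : ∀ j, j ≠ k₀ → βt j = β j := fun j hj => by
    rw [hβt, Function.update_of_ne hj]
  have hCk₀eq : Cmat h βt Λ k₀ = Cmat h β Λ k₀ := by
    rw [hβt]; unfold Cmat
    rw [sum_update_smul_not_mem (Finset.notMem_erase k₀ _)]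
  have hCkeq : ∀ k, k ≠ k₀ → Cmat h βt Λ k
      = Cmat h β Λ k + ((t : ℝ) : ℂ) • vecMulVec (h k₀) (star (h k₀)) := by
    intro k hk
    rw [hβt]; unfold Cmat
    rw [sum_update_smul (Finset.mem_erase.mpr ⟨Ne.symm hk, Finset.mem_univ _⟩), hk₀, sub_zero]
    abel
  have hDeq : Dmat h η βt Λ
      = Dmat h η β Λ + ((t : ℝ) : ℂ) • vecMulVec (h k₀) (star (h k₀)) := by
    rw [hβt]; unfold Dmat
    rw [sum_update_smul (Finset.mem_univ k₀), hk₀, sub_zero]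
    abel
  refine ⟨by rw [hβtk₀]; exact ht, ⟨?_, hΛ, ?_, ?_⟩, ?_⟩
  · intro k
    rcases eq_or_ne k k₀ with rfl | hk
    · rw [hβtk₀]; exact ht.le
    · rw [hβtne k hk]; exact hβ k
  · intro k
    rcases eq_or_ne k k₀ with rfl | hk
    · rw [hCk₀eq, hβtk₀, show (t / γ k : ℝ) = c⁻¹ from by
        rw [htdef, div_right_comm, div_self (hγ k).ne', one_div]]
      exact hpsd
    · rw [hCkeq k hk, hβtne k hk,
        show Cmat h β Λ k + ((t : ℝ) : ℂ) • vecMulVec (h k₀) (star (h k₀))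
            - ((β k / γ k : ℝ) : ℂ) • vecMulVec (h k) (star (h k))
          = (Cmat h β Λ k - ((β k / γ k : ℝ) : ℂ) • vecMulVec (h k) (star (h k)))
            + ((t : ℝ) : ℂ) • vecMulVec (h k₀) (star (h k₀)) from by abel]
      exact (hCk k).add (smul_psd ht.le (outer_psd _))
  · rw [hDeq]
    exact hD.add (smul_psd ht.le (outer_psd _))
  · have hterm : ∀ k : Fin K, βt k * σ k ^ 2
        = β k * σ k ^ 2 + (if k = k₀ then t * σ k₀ ^ 2 else 0) := by
      intro k
      rcases eq_or_ne k k₀ with rfl | hk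
      · rw [hβtk₀, hk₀, if_pos rfl]; ring
      · rw [hβtne k hk, if_neg hk, add_zero]
    calc ∑ k, β k * σ k ^ 2
        < (∑ k, β k * σ k ^ 2) + t * σ k₀ ^ 2 :=
          lt_add_of_pos_right _ (mul_pos ht (pow_pos (hσ k₀) 2))
      _ = ∑ k, βt k * σ k ^ 2 := by
          rw [Finset.sum_congr rfl fun k _ => hterm k, Finset.sum_add_distrib,
            Finset.sum_ite_eq' Finset.univ k₀, if_pos (Finset.mem_univ k₀)]

end Helpers

/-- Appendix B of the paper: if a dual feasible `(β, Λ)` has `β_{k₀} = 0`, then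
raising `β_{k₀}` to `γ̄_{k₀} / (h_{k₀}ᴴ C_{k₀}(β)⁻¹ h_{k₀})` keeps dual feasibility and strictly
increases the dual objective; in particular every dual optimal solution has all `β_k > 0`. -/
theorem stmt17 (M K : ℕ) (hM : 1 ≤ M) (hK : 1 ≤ K)
    (h : Fin K → Fin M → ℂ) (hh : ∀ k, h k ≠ 0)
    (γ : Fin K → ℝ) (hγ : ∀ k, 0 < γ k)
    (σ : Fin K → ℝ) (hσ : ∀ k, 0 < σ k)
    (η : Fin M → ℝ) (hη : ∀ m, 1 < η m)
    (β : Fin K → ℝ) (Λ : Fin M → Matrix (Fin M) (Fin M) ℂ)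
    (hfeas : dualFeasible h γ η β Λ)
    (k₀ : Fin K) (hk₀ : β k₀ = 0)
    (βt : Fin K → ℝ)
    (hβt : βt = Function.update β k₀
      (γ k₀ / (star (h k₀) ⬝ᵥ ((Cmat h β Λ k₀)⁻¹ *ᵥ h k₀)).re)) :
    0 < βt k₀ ∧
    dualFeasible h γ η βt Λ ∧
    ∑ k, β k * σ k ^ 2 < ∑ k, βt k * σ k ^ 2 ∧
    (∀ (βs : Fin K → ℝ) (Λs : Fin M → Matrix (Fin M) (Fin M) ℂ),
      dualFeasible h γ η βs Λs →
      (∀ (β' : Fin K → ℝ) (Λ' : Fin M → Matrix (Fin M) (Fin M) ℂ),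
        dualFeasible h γ η β' Λ' → ∑ k, β' k * σ k ^ 2 ≤ ∑ k, βs k * σ k ^ 2) →
      ∀ k, 0 < βs k) := by
  obtain ⟨h1, h2, h3⟩ := key_step h hh γ hγ σ hσ η β Λ hfeas k₀ hk₀ βt hβt
  refine ⟨h1, h2, h3, ?_⟩
  intro βs Λs hfs hopt k
  by_contra hneg
  have hk0 : βs k = 0 := le_antisymm (not_lt.mp hneg) (hfs.1 k)
  obtain ⟨_, h2', h3'⟩ := key_step h hh γ hγ σ hσ η βs Λs hfs k hk0 _ rfl
  exact absurd (hopt _ Λs h2') (not_le.mpr h3')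
end

section
/- Let n ≥ 2, let A be an (n−1)×(n−1) Hermitian positive semidefinite complex matrix, let λ₀ ∈ ℂ be nonzero, let μ ∈ ℂ^{n−1}, let η > 1 be real, and let s ≥ 0 be real. Define the n×n Hermitian matrix Q by: lower-right block Q^{(2:n,2:n)} = A, first column below the diagonal Q^{(2:n,1)} = −A μ / λ₀, first row Q^{(1,2:n)} = (Q^{(2:n,1)})†, and Q^{(1,1)} = (η/(η−1)) · (μ† A μ) / |λ₀|² + s/(η−1). Then Q is positive semidefinite. -/
open Matrix
open scoped ComplexOrder

/-- inductive step of the paper's Lemma 6: the matrix `Q` built from a positive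
semidefinite block `A`, first column `−Aμ/λ₀`, and top-left entry
`(η/(η−1))·(μᴴAμ)/|λ₀|² + s/(η−1)` is positive semidefinite (sizes: `A` is
`(n+1) × (n+1)` and `Q` is `(n+2) × (n+2)`, so the total size is at least `2`). -/
theorem stmt18 (n : ℕ)
    (A : Matrix (Fin (n + 1)) (Fin (n + 1)) ℂ) (hA : A.PosSemidef)
    (lam0 : ℂ) (hlam0 : lam0 ≠ 0) (μ : Fin (n + 1) → ℂ)
    (η : ℝ) (hη : 1 < η) (s : ℝ) (hs : 0 ≤ s)
    (Q : Matrix (Fin (n + 2)) (Fin (n + 2)) ℂ)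
    (hQ : Q = Matrix.of fun i j =>
      if hi : i = 0 then
        if hj : j = 0 then
          ((η / (η - 1) : ℝ) : ℂ) * (star μ ⬝ᵥ (A *ᵥ μ)) / ((Complex.normSq lam0 : ℝ) : ℂ)
            + ((s / (η - 1) : ℝ) : ℂ)
        else star ((-(A *ᵥ μ) (j.pred hj)) / lam0)
      else
        if hj : j = 0 then (-(A *ᵥ μ) (i.pred hi)) / lam0
        else A (i.pred hi) (j.pred hj)) :
    Q.PosSemidef := by
  have hη1 : (0:ℝ) < η - 1 := by linarith
  have hN : (0:ℝ) < Complex.normSq lam0 := Complex.normSq_pos.2 hlam0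
  set t : ℂ := star μ ⬝ᵥ (A *ᵥ μ) with ht_def
  have ht : 0 ≤ t := hA.dotProduct_mulVec_nonneg μ
  have htre : 0 ≤ t.re := (Complex.le_def.1 ht).1
  have htim : t.im = 0 := ((Complex.le_def.1 ht).2).symm
  have htreal : (t.re : ℂ) = t := Complex.ext rfl (by simp [htim])
  set N : ℝ := Complex.normSq lam0 with hN_def
  set r : ℝ := (t.re / N + s) / (η - 1) with hr_def
  have hr : 0 ≤ r := by
    apply div_nonneg _ (le_of_lt hη1)
    have := div_nonneg htre (le_of_lt hN)
    linarith
  set C : Matrix (Fin (n + 1)) (Fin (n + 2)) ℂ :=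
    Matrix.of (fun k j => if h : j = 0 then -μ k / lam0 else if k = j.pred h then 1 else 0)
    with hC_def
  set D : Matrix (Fin (n + 2)) (Fin (n + 2)) ℂ :=
    Matrix.of (fun k j => if k = 0 then (if j = 0 then ((Real.sqrt r : ℝ) : ℂ) else 0) else 0)
    with hD_def
  have hAC : ∀ (k : Fin (n+1)) (j : Fin (n+2)), (A * C) k j =
      if h : j = 0 then -(A *ᵥ μ) k / lam0 else A k (j.pred h) := by
    intro k j
    by_cases hj : j = 0
    · simp only [hj, Matrix.mul_apply, hC_def, Matrix.of_apply, dif_pos, mulVec, dotProduct,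
        neg_div, Finset.sum_div]
      rw [← Finset.sum_neg_distrib]
      exact Finset.sum_congr rfl fun l _ => by ring
    · simp only [Matrix.mul_apply, hC_def, Matrix.of_apply, dif_neg hj, mul_ite, mul_one, mul_zero]
      rw [Finset.sum_ite_eq' Finset.univ (j.pred hj) (fun l => A k l)]
      simp
  have hNc : (N : ℂ) = star lam0 * lam0 := by
    simp [hN_def, Complex.normSq_eq_conj_mul_self, RCLike.star_def]
  have hdecomp : Q = Cᴴ * (A * C) + Dᴴ * D := by
    rw [hQ]
    ext i j
    simp only [Matrix.add_apply, Matrix.of_apply]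
    have hCAC : (Cᴴ * (A * C)) i j = ∑ k, star (C k i) * (A * C) k j := by
      simp [Matrix.mul_apply, Matrix.conjTranspose_apply]
    have hDD : (Dᴴ * D) i j =
        (if i = 0 then (if j = 0 then (r : ℂ) else 0) else 0) := by
      simp only [Matrix.mul_apply, Matrix.conjTranspose_apply, hD_def, Matrix.of_apply]
      rw [Finset.sum_eq_single (0 : Fin (n+2))]
      · by_cases hi : i = 0 <;> by_cases hj : j = 0 <;>
          simp [hi, hj, ← Complex.ofReal_mul, Real.mul_self_sqrt hr]
      · intro b _ hb; simp [hb]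
      · simp
    rw [hCAC, hDD]
    by_cases hi : i = 0
    · by_cases hj : j = 0
      · simp only [hi, hj, dif_pos]
        have : ∀ k, star (C k 0) * (A * C) k 0 = star (μ k) * (A *ᵥ μ) k / (N : ℂ) := by
          intro k
          rw [hAC]
          simp only [hC_def, Matrix.of_apply, dif_pos, star_div₀, star_neg, hNc]
          field_simp
        rw [Finset.sum_congr rfl fun k _ => this k]
        rw [← Finset.sum_div]
        have hsum : ∑ k, star (μ k) * (A *ᵥ μ) k = t := by
          simp [ht_def, dotProduct]
        rw [hsum]
        rw [← htreal]
        have hNne : (N : ℂ) ≠ 0 := by exact_mod_cast ne_of_gt hN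
        have hη1c : ((η : ℂ) - 1) ≠ 0 := by
          intro h
          have : (η : ℂ) = 1 := by linear_combination h
          have : η = (1:ℝ) := by exact_mod_cast this
          linarith
        simp only [hr_def]
        push_cast
        field_simp
        ring
      · subst hi
        rw [dif_pos rfl, dif_neg hj, if_pos rfl, if_neg hj, add_zero]
        have key : ∀ k, star (C k 0) * (A * C) k j
            = star ((-μ k / lam0) * A (j.pred hj) k) := by
          intro k; rw [hAC]
          simp only [hC_def, Matrix.of_apply, dif_pos, dif_neg hj]
          rw [← hA.1.apply k (j.pred hj), ← star_mul']
        rw [Finset.sum_congr rfl fun k _ => key k, ← star_sum]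
        congr 1
        simp only [mulVec, dotProduct, neg_div, Finset.sum_div]
        rw [← Finset.sum_neg_distrib]
        exact Finset.sum_congr rfl fun l _ => by ring
    · rw [dif_neg hi, if_neg hi, add_zero]
      have key : ∀ k, star (C k i) * (A * C) k j
          = if k = i.pred hi then (A * C) k j else 0 := by
        intro k
        simp only [hC_def, Matrix.of_apply, dif_neg hi]
        by_cases hk : k = i.pred hi <;> simp [hk]
      rw [Finset.sum_congr rfl fun k _ => key k,
        Finset.sum_ite_eq' Finset.univ (i.pred hi) (fun k => (A * C) k j),
        if_pos (Finset.mem_univ _), hAC]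
  rw [hdecomp, ← Matrix.mul_assoc]
  exact (hA.conjTranspose_mul_mul_same C).add (posSemidef_conjTranspose_mul_self D)
end
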